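/- arXiv:math/0005231 — 7 statements merged into one kernel-verified Lean document; each statement's English description precedes it below -/
import Mathlib

section
/- Let N ≥ 2 be an integer, c ∈ (1,N), σ > 0, and set a = c/N, b = (N²/c − 1)/(N − 1), θ = σb, γ = log c / log(N/c) (so that a^{γ+1} = 1/N and γ > 0), and κ = (N−1)/θ^{γ+1}. For an integer i ≥ 0 let p_t(i) = N^{−i}(δ_{0i} − 1)e^{−θ a^i t} + (N − 1) Σ_{j=i+1}^∞ N^{−j} e^{−θ a^j t} for t > 0, where δ_{0i} = 1 if i = 0 and 0 otherwise. Then for every integer i ≥ 0, ∫_t^∞ p_s(i) ds is finite for all t > 0 and lim_{t→∞} ( t^γ ∫_t^∞ p_s(i) ds − κ · Σ_{j∈ℤ} (θ a^j t)^γ e^{−θ a^j t} ) = 0. -/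
open MeasureTheory Filter Topology

lemma aux_integrable_tsum {α : Type*} [MeasurableSpace α] {μ : Measure α} {f : ℕ → α → ℝ}
    (hm : AEStronglyMeasurable (fun x => ∑' n, f n x) μ)
    (hf : ∀ n, Integrable (f n) μ) (hs : Summable fun n => ∫ x, ‖f n x‖ ∂μ) :
    Integrable (fun x => ∑' n, f n x) μ := by
  refine ⟨hm, ?_⟩
  have hpt : ∀ x, (‖∑' n, f n x‖₊ : ENNReal) ≤ ∑' n, (‖f n x‖₊ : ENNReal) := by
    intro x
    by_cases h : Summable fun n => ‖f n x‖₊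
    · calc (‖∑' n, f n x‖₊ : ENNReal) ≤ ((∑' n, ‖f n x‖₊ : NNReal) : ENNReal) :=
            ENNReal.coe_le_coe.2 (nnnorm_tsum_le h)
        _ = ∑' n, (‖f n x‖₊ : ENNReal) := ENNReal.coe_tsum h
    · have h2 : ¬ Summable fun n => f n x := by
        intro h3
        apply h
        rw [← NNReal.summable_coe]
        simpa [← Real.norm_eq_abs] using h3.abs
      rw [tsum_eq_zero_of_not_summable h2]
      simp
  rw [HasFiniteIntegral]
  calc ∫⁻ x, ‖∑' n, f n x‖₊ ∂μ ≤ ∫⁻ x, ∑' n, (‖f n x‖₊ : ENNReal) ∂μ := lintegral_mono hpt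
    _ = ∑' n, ∫⁻ x, ‖f n x‖₊ ∂μ := lintegral_tsum fun n => (hf n).aestronglyMeasurable.enorm
    _ = ∑' n, ENNReal.ofReal (∫ x, ‖f n x‖ ∂μ) := by
        refine tsum_congr fun n => ?_
        exact (ofReal_integral_norm_eq_lintegral_enorm (hf n)).symm
    _ = ENNReal.ofReal (∑' n, ∫ x, ‖f n x‖ ∂μ) :=
        (ENNReal.ofReal_tsum_of_nonneg (fun n => integral_nonneg fun x => norm_nonneg _) hs).symm
    _ < ⊤ := ENNReal.ofReal_lt_top

set_option maxHeartbeats 1000000 in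
theorem stmt11 (N : ℕ) (hN : 2 ≤ N) (c σ : ℝ) (hc1 : 1 < c) (hcN : c < N) (hσ : 0 < σ)
    (a b θ γ κ : ℝ)
    (ha : a = c / N) (hb : b = ((N:ℝ) ^ 2 / c - 1) / ((N:ℝ) - 1)) (hθ : θ = σ * b)
    (hγ : γ = Real.log c / Real.log ((N:ℝ) / c))
    (hκ : κ = ((N:ℝ) - 1) / θ ^ (γ + 1))
    (p : ℕ → ℝ → ℝ)
    (hp : ∀ (i : ℕ), ∀ t > 0, p i t =
      ((N:ℝ) ^ i)⁻¹ * ((if i = 0 then (1:ℝ) else 0) - 1) * Real.exp (-(θ * a ^ i * t)) +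
        ((N:ℝ) - 1) *
          ∑' j : ℕ, ((N:ℝ) ^ (i + 1 + j))⁻¹ * Real.exp (-(θ * a ^ (i + 1 + j) * t))) :
    ∀ i : ℕ,
      (∀ t > 0, IntegrableOn (p i) (Set.Ioi t)) ∧
      Tendsto (fun t : ℝ =>
          t ^ γ * (∫ s in Set.Ioi t, p i s) -
            κ * ∑' j : ℤ, (θ * a ^ j * t) ^ γ * Real.exp (-(θ * a ^ j * t)))
        atTop (𝓝 0) := by
  -- basic facts
  have hN2 : (2:ℝ) ≤ (N:ℝ) := by exact_mod_cast hN
  have hN0 : (0:ℝ) < (N:ℝ) := by linarith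
  have hc0 : (0:ℝ) < c := by linarith
  have ha0 : 0 < a := by rw [ha]; positivity
  have ha1 : a < 1 := by rw [ha, div_lt_one hN0]; exact hcN
  have hNa : (N:ℝ) * a = c := by rw [ha]; field_simp
  have hb0 : 0 < b := by
    rw [hb]
    have h1 : c < (N:ℝ)^2 := by nlinarith
    exact div_pos (sub_pos.2 ((one_lt_div hc0).2 h1)) (by linarith)
  have hθ0 : 0 < θ := hθ ▸ mul_pos hσ hb0
  have hγ0 : 0 < γ := by
    rw [hγ]; exact div_pos (Real.log_pos hc1) (Real.log_pos ((one_lt_div hc0).2 hcN))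
  have hθam : ∀ m : ℕ, 0 < θ * a ^ m := fun m => mul_pos hθ0 (pow_pos ha0 m)
  have haγ : a ^ γ = c⁻¹ := by
    have hlogN : Real.log ((N:ℝ)/c) = Real.log (N:ℝ) - Real.log c := Real.log_div hN0.ne' hc0.ne'
    have hloga : Real.log a = Real.log c - Real.log (N:ℝ) := by
      rw [ha, Real.log_div hc0.ne' hN0.ne']
    have hne : Real.log ((N:ℝ)/c) ≠ 0 := (Real.log_pos ((one_lt_div hc0).2 hcN)).ne'
    have hne2 : Real.log (N:ℝ) - Real.log c ≠ 0 := by rwa [hlogN] at hne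
    have hmul : Real.log a * γ = -Real.log c := by
      rw [hγ, hloga, hlogN]
      field_simp
      ring
    rw [Real.rpow_def_of_pos ha0, hmul, Real.exp_neg, Real.exp_log hc0]
  have hapow : ∀ n : ℕ, (a ^ n) ^ γ = (c⁻¹) ^ n := by
    intro n
    rw [← Real.rpow_natCast a n, ← Real.rpow_mul ha0.le, mul_comm, Real.rpow_mul ha0.le, haγ,
      Real.rpow_natCast]
  have hcinv1 : c⁻¹ < 1 := by
    rw [inv_lt_one_iff₀]; right; exact hc1
  have hNinv1 : (N:ℝ)⁻¹ < 1 := by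
    rw [inv_lt_one_iff₀]; right; linarith
  -- exponential integrals
  have hIexp : ∀ (m : ℕ) (t : ℝ), IntegrableOn (fun s => Real.exp (-(θ * a ^ m * s))) (Set.Ioi t) := by
    intro m t
    simpa [neg_mul] using exp_neg_integrableOn_Ioi t (hθam m)
  have hVexp : ∀ (m : ℕ) (t : ℝ), (∫ s in Set.Ioi t, Real.exp (-(θ * a ^ m * s)))
      = (θ * a ^ m)⁻¹ * Real.exp (-(θ * a ^ m * t)) := by
    intro m t
    have h := integral_comp_mul_left_Ioi (fun x => Real.exp (-x)) t (hθam m)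
    simp only [smul_eq_mul] at h
    rw [integral_exp_neg_Ioi] at h
    exact h
  intro i
  have hfI : ∀ (k : ℕ) (t : ℝ),
      IntegrableOn (fun s => ((N:ℝ) ^ (i+1+k))⁻¹ * Real.exp (-(θ * a ^ (i+1+k) * s)))
        (Set.Ioi t) := fun k t => (hIexp _ t).const_mul _
  have hnormval : ∀ (k : ℕ) (t : ℝ),
      (∫ s in Set.Ioi t, ‖((N:ℝ) ^ (i+1+k))⁻¹ * Real.exp (-(θ * a ^ (i+1+k) * s))‖)
        = ((N:ℝ) ^ (i+1+k))⁻¹ * ((θ * a ^ (i+1+k))⁻¹ * Real.exp (-(θ * a ^ (i+1+k) * t))) := by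
    intro k t
    have hnn : ∀ s : ℝ, ‖((N:ℝ) ^ (i+1+k))⁻¹ * Real.exp (-(θ * a ^ (i+1+k) * s))‖
        = ((N:ℝ) ^ (i+1+k))⁻¹ * Real.exp (-(θ * a ^ (i+1+k) * s)) := fun s =>
      Real.norm_of_nonneg (by positivity)
    simp_rw [hnn]
    rw [integral_const_mul, hVexp]
  have hid : ∀ m : ℕ, ((N:ℝ)^m)⁻¹ * (θ * a^m)⁻¹ = θ⁻¹ * (c⁻¹)^m := by
    intro m
    have h1 : (N:ℝ)^m * a^m = c^m := by rw [← mul_pow, hNa]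
    rw [inv_pow, ← h1, mul_inv, mul_inv]
    ring
  have hvalbound : ∀ (m : ℕ) (t : ℝ), 0 < t →
      ((N:ℝ)^m)⁻¹ * ((θ * a^m)⁻¹ * Real.exp (-(θ * a^m * t))) ≤ θ⁻¹ * (c⁻¹)^m := by
    intro m t ht
    have hexp : Real.exp (-(θ * a^m * t)) ≤ 1 := by
      rw [Real.exp_le_one_iff]
      nlinarith [hθam m]
    calc ((N:ℝ)^m)⁻¹ * ((θ * a^m)⁻¹ * Real.exp (-(θ * a^m * t)))
        ≤ ((N:ℝ)^m)⁻¹ * ((θ * a^m)⁻¹ * 1) := by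
          apply mul_le_mul_of_nonneg_left _ (by positivity)
          exact mul_le_mul_of_nonneg_left hexp (by positivity)
      _ = θ⁻¹ * (c⁻¹)^m := by rw [mul_one, hid m]
  have hgeoc : Summable (fun k : ℕ => θ⁻¹ * (c⁻¹)^(i+1+k)) := by
    have h := (summable_geometric_of_lt_one (by positivity) hcinv1).mul_left
      (θ⁻¹ * (c⁻¹)^(i+1))
    exact h.congr fun k => by rw [pow_add]; ring
  have hsumnorm : ∀ t : ℝ, 0 < t → Summable (fun k : ℕ =>
      ∫ s in Set.Ioi t, ‖((N:ℝ) ^ (i+1+k))⁻¹ * Real.exp (-(θ * a ^ (i+1+k) * s))‖) := by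
    intro t ht
    apply Summable.of_nonneg_of_le (fun k => integral_nonneg fun s => norm_nonneg _)
      (fun k => ?_) hgeoc
    rw [hnormval k t]
    exact hvalbound _ t ht
  have hsummN : Summable (fun k : ℕ => ((N:ℝ)^(i+1+k))⁻¹) := by
    have h := (summable_geometric_of_lt_one (by positivity) hNinv1).mul_left
      (((N:ℝ)^(i+1))⁻¹)
    exact h.congr fun k => by rw [pow_add (N:ℝ) (i+1) k, mul_inv, inv_pow]
  have hconts : ∀ t : ℝ, 0 < t → AEStronglyMeasurable
      (fun s => ∑' k, ((N:ℝ) ^ (i+1+k))⁻¹ * Real.exp (-(θ * a ^ (i+1+k) * s)))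
      (volume.restrict (Set.Ioi t)) := by
    intro t ht
    apply ContinuousOn.aestronglyMeasurable _ measurableSet_Ioi
    apply continuousOn_tsum (fun k => Continuous.continuousOn (by fun_prop)) hsummN
    intro k s hs
    have hs0 : 0 < s := lt_trans ht hs
    rw [Real.norm_of_nonneg (by positivity)]
    have hexp : Real.exp (-(θ * a^(i+1+k) * s)) ≤ 1 := by
      rw [Real.exp_le_one_iff]
      nlinarith [hθam (i+1+k)]
    calc ((N:ℝ) ^ (i+1+k))⁻¹ * Real.exp (-(θ * a ^ (i+1+k) * s))
        ≤ ((N:ℝ) ^ (i+1+k))⁻¹ * 1 := mul_le_mul_of_nonneg_left hexp (by positivity)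
      _ = ((N:ℝ) ^ (i+1+k))⁻¹ := mul_one _
  have htsumI : ∀ t : ℝ, 0 < t → IntegrableOn
      (fun s => ∑' k, ((N:ℝ) ^ (i+1+k))⁻¹ * Real.exp (-(θ * a ^ (i+1+k) * s))) (Set.Ioi t) :=
    fun t ht => aux_integrable_tsum (hconts t ht) (fun k => hfI k t) (hsumnorm t ht)
  have hPint : ∀ t > (0:ℝ), IntegrableOn (p i) (Set.Ioi t) := by
    intro t ht
    refine IntegrableOn.congr_fun ?_ (fun s hs => (hp i s (lt_trans ht hs)).symm)
      measurableSet_Ioi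
    exact ((hIexp i t).const_mul _).add ((htsumI t ht).const_mul _)
  have hIntVal : ∀ t : ℝ, 0 < t → (∫ s in Set.Ioi t, p i s) =
      ((N:ℝ) ^ i)⁻¹ * ((if i = 0 then (1:ℝ) else 0) - 1) *
          ((θ * a ^ i)⁻¹ * Real.exp (-(θ * a ^ i * t))) +
        ((N:ℝ) - 1) * ∑' k : ℕ, ((N:ℝ) ^ (i+1+k))⁻¹ *
          ((θ * a ^ (i+1+k))⁻¹ * Real.exp (-(θ * a ^ (i+1+k) * t))) := by
    intro t ht
    rw [setIntegral_congr_fun measurableSet_Ioi (fun s hs => hp i s (lt_trans ht hs))]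
    rw [integral_add ((hIexp i t).const_mul _) ((htsumI t ht).const_mul _)]
    congr 1
    · rw [integral_const_mul, hVexp]
    · rw [integral_const_mul]
      congr 1
      rw [← integral_tsum_of_summable_integral_norm (fun k => hfI k t) (hsumnorm t ht)]
      exact tsum_congr fun k => by rw [integral_const_mul, hVexp]
  -- key identity
  have keyId : ∀ (m : ℕ) (t : ℝ), 0 < t →
      t ^ γ * (((N:ℝ)^m)⁻¹ * ((θ * a^m)⁻¹ * Real.exp (-(θ * a^m * t)))) =
      (1 / θ^(γ+1)) * ((θ * a^m * t)^γ * Real.exp (-(θ * a^m * t))) := by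
    intro m t ht
    have hθγ : (0:ℝ) < θ^γ := Real.rpow_pos_of_pos hθ0 γ
    have e1 : (θ * a^m * t)^γ = θ^γ * (c⁻¹)^m * t^γ := by
      rw [Real.mul_rpow (hθam m).le ht.le, Real.mul_rpow hθ0.le (by positivity), hapow m]
    have e2 : θ^(γ+1) = θ^γ * θ := by rw [Real.rpow_add hθ0, Real.rpow_one]
    rw [e1, e2]
    calc t ^ γ * (((N:ℝ)^m)⁻¹ * ((θ * a^m)⁻¹ * Real.exp (-(θ * a^m * t))))
        = (((N:ℝ)^m)⁻¹ * (θ * a^m)⁻¹) * (t^γ * Real.exp (-(θ * a^m * t))) := by ring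
      _ = (θ⁻¹ * (c⁻¹)^m) * (t^γ * Real.exp (-(θ * a^m * t))) := by rw [hid m]
      _ = (1 / (θ^γ * θ)) * (θ^γ * (c⁻¹)^m * t^γ * Real.exp (-(θ * a^m * t))) := by
          field_simp
  -- threshold U
  obtain ⟨U, hU1, hU⟩ : ∃ U : ℝ, 1 ≤ U ∧ ∀ y : ℝ, U ≤ y →
      y^γ * Real.exp (-y) ≤ Real.exp (-(y/2)) := by
    have h := tendsto_rpow_mul_exp_neg_mul_atTop_nhds_zero γ (1/2) (by norm_num)
    have h2 := h.eventually (eventually_le_nhds one_pos)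
    obtain ⟨U₀, hU₀⟩ := eventually_atTop.mp h2
    refine ⟨max U₀ 1, le_max_right _ _, fun y hy => ?_⟩
    have h3 : y^γ * Real.exp (-(1/2) * y) ≤ 1 := hU₀ y (le_trans (le_max_left _ _) hy)
    have h4 : Real.exp (-y) = Real.exp (-(1/2) * y) * Real.exp (-(y/2)) := by
      rw [← Real.exp_add]; ring_nf
    rw [h4, ← mul_assoc]
    exact mul_le_of_le_one_left (Real.exp_pos _).le h3
  have hainv1 : 1 < a⁻¹ := (one_lt_inv₀ ha0).2 ha1
  have hd0 : 0 < a⁻¹ - 1 := by linarith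
  have hgeoexp : ∀ w : ℝ, 0 < w → Summable (fun n : ℕ => Real.exp (-(w * (a⁻¹)^n))) := by
    intro w hw
    have hr1 : Real.exp (-(w * (a⁻¹ - 1))) < 1 := by
      rw [Real.exp_lt_one_iff]
      nlinarith
    apply Summable.of_nonneg_of_le (fun n => (Real.exp_pos _).le) (fun n => ?_)
      ((summable_geometric_of_lt_one (Real.exp_pos _).le hr1).mul_left (Real.exp (-w)))
    have hbern : 1 + (n:ℝ) * (a⁻¹ - 1) ≤ (a⁻¹)^n := by
      have h := one_add_mul_le_pow (by nlinarith : (-2:ℝ) ≤ a⁻¹ - 1) n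
      calc 1 + (n:ℝ) * (a⁻¹ - 1) ≤ (1 + (a⁻¹ - 1))^n := h
        _ = (a⁻¹)^n := by rw [show 1 + (a⁻¹ - 1) = a⁻¹ by ring]
    calc Real.exp (-(w * (a⁻¹)^n)) ≤ Real.exp (-(w * (1 + (n:ℝ) * (a⁻¹ - 1)))) := by
          apply Real.exp_le_exp.2
          nlinarith
      _ = Real.exp (-w) * Real.exp (-(w * (a⁻¹ - 1)))^n := by
          rw [← Real.exp_nat_mul, ← Real.exp_add]
          ring_nf
  have hvbound : ∀ u : ℝ, U ≤ u → ∀ n : ℕ,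
      (u * (a⁻¹)^n)^γ * Real.exp (-(u * (a⁻¹)^n)) ≤
        Real.exp (-(u/4)) * Real.exp (-(U/4 * (a⁻¹)^n)) := by
    intro u hu n
    have hpow1 : (1:ℝ) ≤ (a⁻¹)^n := one_le_pow₀ hainv1.le
    have hy : U ≤ u * (a⁻¹)^n := by nlinarith
    have h1 := hU _ hy
    have h2 : Real.exp (-(u * (a⁻¹)^n / 2)) ≤
        Real.exp (-(u/4)) * Real.exp (-(U/4 * (a⁻¹)^n)) := by
      rw [← Real.exp_add]
      apply Real.exp_le_exp.2
      nlinarith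
    exact le_trans h1 h2
  have hvsum : ∀ u : ℝ, U ≤ u →
      Summable (fun n : ℕ => (u * (a⁻¹)^n)^γ * Real.exp (-(u * (a⁻¹)^n))) := by
    intro u hu
    have hu0 : 0 < u := by linarith
    apply Summable.of_nonneg_of_le (fun n => by positivity) (hvbound u hu)
    exact (hgeoexp (U/4) (by linarith)).mul_left _
  have hBle : ∀ u : ℝ, U ≤ u →
      (∑' n : ℕ, (u * (a⁻¹)^n)^γ * Real.exp (-(u * (a⁻¹)^n))) ≤
        Real.exp (-(u/4)) * ∑' n : ℕ, Real.exp (-(U/4 * (a⁻¹)^n)) := by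
    intro u hu
    rw [← tsum_mul_left]
    exact Summable.tsum_le_tsum (hvbound u hu) (hvsum u hu)
      ((hgeoexp (U/4) (by linarith)).mul_left _)
  have hnatsum : ∀ t : ℝ, 0 < t → Summable (fun n : ℕ =>
      (θ * a^(i+1+n) * t)^γ * Real.exp (-(θ * a^(i+1+n) * t))) := by
    intro t ht
    apply Summable.of_nonneg_of_le (fun n => by positivity) (fun n => ?_)
      ((summable_geometric_of_lt_one (by positivity) hcinv1).mul_left ((θ * a^(i+1) * t)^γ))
    have e : θ * a^(i+1+n) * t = (θ * a^(i+1) * t) * a^n := by rw [pow_add]; ring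
    rw [e, Real.mul_rpow (by positivity) (by positivity), hapow n]
    apply mul_le_of_le_one_right (by positivity)
    rw [Real.exp_le_one_iff]
    have hx : 0 < θ * a^(i+1) * t * a^n := by positivity
    linarith
  -- cast identities
  have e1 : ∀ n : ℕ, a^((n:ℤ) + ((i:ℤ)+1)) = a^(i+1+n) := by
    intro n
    rw [show (n:ℤ) + ((i:ℤ)+1) = ((i+1+n : ℕ) : ℤ) by push_cast; ring, zpow_natCast]
  have e2 : ∀ n : ℕ, a^(-((n:ℤ)+1) + ((i:ℤ)+1)) = a^i * (a⁻¹)^n := by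
    intro n
    rw [show -((n:ℤ)+1) + ((i:ℤ)+1) = (i:ℤ) - (n:ℤ) by ring, zpow_sub₀ ha0.ne',
      zpow_natCast, zpow_natCast, div_eq_mul_inv, inv_pow]
  have hsplit : ∀ t : ℝ, 0 < t → U ≤ θ * a^i * t →
      (∑' j : ℤ, (θ * a^j * t)^γ * Real.exp (-(θ * a^j * t))) =
      (∑' n : ℕ, (θ * a^(i+1+n) * t)^γ * Real.exp (-(θ * a^(i+1+n) * t))) +
      (∑' n : ℕ, ((θ * a^i * t) * (a⁻¹)^n)^γ * Real.exp (-((θ * a^i * t) * (a⁻¹)^n))) := by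
    intro t ht hut
    have harg : ∀ n : ℕ, θ * (a^i * (a⁻¹)^n) * t = (θ * a^i * t) * (a⁻¹)^n := fun n => by ring
    have h1 : Summable (fun n : ℕ =>
        (θ * a^((n:ℤ) + ((i:ℤ)+1)) * t)^γ * Real.exp (-(θ * a^((n:ℤ) + ((i:ℤ)+1)) * t))) := by
      simp only [e1]
      exact hnatsum t ht
    have h2 : Summable (fun n : ℕ =>
        (θ * a^(-((n:ℤ)+1) + ((i:ℤ)+1)) * t)^γ *
          Real.exp (-(θ * a^(-((n:ℤ)+1) + ((i:ℤ)+1)) * t))) := by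
      simp only [e2, harg]
      exact hvsum _ hut
    have hmain := tsum_of_nat_of_neg_add_one
      (f := fun j : ℤ => (θ * a^(j + ((i:ℤ)+1)) * t)^γ * Real.exp (-(θ * a^(j + ((i:ℤ)+1)) * t)))
      h1 h2
    have hshift := Equiv.tsum_eq (Equiv.addRight ((i:ℤ)+1))
      (fun j : ℤ => (θ * a^j * t)^γ * Real.exp (-(θ * a^j * t)))
    simp only [Equiv.coe_addRight] at hshift
    rw [← hshift, hmain]
    congr 1
    · exact tsum_congr fun n => by simp only [e1]
    · exact tsum_congr fun n => by simp only [e2, harg]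
  -- eventual equality
  have hTt : ∀ t : ℝ, max (U / (θ * a^i)) 1 ≤ t → 0 < t ∧ U ≤ θ * a^i * t := by
    intro t hT
    have ht1 : (1:ℝ) ≤ t := le_trans (le_max_right _ _) hT
    have ht : 0 < t := by linarith
    refine ⟨ht, ?_⟩
    have h1 : U / (θ * a^i) ≤ t := le_trans (le_max_left _ _) hT
    rw [div_le_iff₀ (hθam i)] at h1
    calc U ≤ t * (θ * a^i) := h1
      _ = θ * a^i * t := by ring
  have hfinal : ∀ t : ℝ, max (U / (θ * a^i)) 1 ≤ t →
      t ^ γ * (∫ s in Set.Ioi t, p i s) -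
        κ * ∑' j : ℤ, (θ * a ^ j * t) ^ γ * Real.exp (-(θ * a ^ j * t)) =
      ((if i = 0 then (1:ℝ) else 0) - 1) *
          ((1 / θ^(γ+1)) * ((θ * a^i * t)^γ * Real.exp (-(θ * a^i * t)))) -
        κ * ∑' n : ℕ, ((θ * a^i * t) * (a⁻¹)^n)^γ * Real.exp (-((θ * a^i * t) * (a⁻¹)^n)) := by
    intro t hT
    obtain ⟨ht, hut⟩ := hTt t hT
    rw [hIntVal t ht, hsplit t ht hut, mul_add]
    have hA : t^γ * (((N:ℝ) ^ i)⁻¹ * ((if i = 0 then (1:ℝ) else 0) - 1) *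
        ((θ * a ^ i)⁻¹ * Real.exp (-(θ * a ^ i * t)))) =
        ((if i = 0 then (1:ℝ) else 0) - 1) *
          ((1 / θ^(γ+1)) * ((θ * a^i * t)^γ * Real.exp (-(θ * a^i * t)))) := by
      calc t^γ * (((N:ℝ) ^ i)⁻¹ * ((if i = 0 then (1:ℝ) else 0) - 1) *
            ((θ * a ^ i)⁻¹ * Real.exp (-(θ * a ^ i * t))))
          = ((if i = 0 then (1:ℝ) else 0) - 1) *
            (t^γ * (((N:ℝ) ^ i)⁻¹ * ((θ * a ^ i)⁻¹ * Real.exp (-(θ * a ^ i * t))))) := by ring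
        _ = _ := by rw [keyId i t ht]
    have hB2 : t^γ * (((N:ℝ) - 1) * ∑' k : ℕ, ((N:ℝ) ^ (i+1+k))⁻¹ *
        ((θ * a ^ (i+1+k))⁻¹ * Real.exp (-(θ * a ^ (i+1+k) * t)))) =
        κ * ∑' n : ℕ, (θ * a^(i+1+n) * t)^γ * Real.exp (-(θ * a^(i+1+n) * t)) := by
      calc t^γ * (((N:ℝ) - 1) * ∑' k : ℕ, ((N:ℝ) ^ (i+1+k))⁻¹ *
            ((θ * a ^ (i+1+k))⁻¹ * Real.exp (-(θ * a ^ (i+1+k) * t))))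
          = ((N:ℝ) - 1) * ∑' k : ℕ, t^γ * (((N:ℝ) ^ (i+1+k))⁻¹ *
            ((θ * a ^ (i+1+k))⁻¹ * Real.exp (-(θ * a ^ (i+1+k) * t)))) := by
            rw [tsum_mul_left]; ring
        _ = ((N:ℝ) - 1) * ∑' k : ℕ, (1 / θ^(γ+1)) *
            ((θ * a^(i+1+k) * t)^γ * Real.exp (-(θ * a^(i+1+k) * t))) := by
            congr 1
            exact tsum_congr fun k => keyId (i+1+k) t ht
        _ = κ * ∑' n : ℕ, (θ * a^(i+1+n) * t)^γ * Real.exp (-(θ * a^(i+1+n) * t)) := by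
            rw [tsum_mul_left, hκ]
            ring
    rw [hA, hB2, mul_add]
    ring
  refine ⟨hPint, ?_⟩
  -- limits
  have hu_tendsto : Tendsto (fun t : ℝ => θ * a^i * t) atTop atTop := by
    exact Tendsto.const_mul_atTop (hθam i) tendsto_id
  have hg0 : Tendsto (fun t : ℝ => (θ * a^i * t)^γ * Real.exp (-(θ * a^i * t))) atTop (𝓝 0) := by
    have h := tendsto_rpow_mul_exp_neg_mul_atTop_nhds_zero γ 1 one_pos
    have h2 : Tendsto (fun y : ℝ => y^γ * Real.exp (-y)) atTop (𝓝 0) := by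
      simpa [neg_one_mul] using h
    exact h2.comp hu_tendsto
  have hBtends : Tendsto (fun t : ℝ =>
      ∑' n : ℕ, ((θ * a^i * t) * (a⁻¹)^n)^γ * Real.exp (-((θ * a^i * t) * (a⁻¹)^n)))
      atTop (𝓝 0) := by
    have hF0 : Tendsto (fun t : ℝ =>
        Real.exp (-(θ * a^i * t / 4)) * ∑' n : ℕ, Real.exp (-(U/4 * (a⁻¹)^n))) atTop (𝓝 0) := by
      have h4 : Tendsto (fun t : ℝ => θ * a^i * t / 4) atTop atTop :=
        hu_tendsto.atTop_div_const (by norm_num)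
      have h5 : Tendsto (fun t : ℝ => -(θ * a^i * t / 4)) atTop atBot :=
        tendsto_neg_atTop_atBot.comp h4
      have h6 := (Real.tendsto_exp_atBot.comp h5).mul_const
        (∑' n : ℕ, Real.exp (-(U/4 * (a⁻¹)^n)))
      simpa using h6
    apply tendsto_of_tendsto_of_tendsto_of_le_of_le' tendsto_const_nhds hF0
    · filter_upwards [eventually_gt_atTop (0:ℝ)] with t ht
      exact tsum_nonneg fun n =>
        mul_nonneg (Real.rpow_nonneg (by positivity) _) (Real.exp_pos _).le
    · filter_upwards [eventually_ge_atTop (max (U / (θ * a^i)) 1)] with t hT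
      obtain ⟨ht, hut⟩ := hTt t hT
      exact hBle _ hut
  have hcomb : Tendsto (fun t : ℝ =>
      ((if i = 0 then (1:ℝ) else 0) - 1) *
        ((1 / θ^(γ+1)) * ((θ * a^i * t)^γ * Real.exp (-(θ * a^i * t)))) -
      κ * ∑' n : ℕ, ((θ * a^i * t) * (a⁻¹)^n)^γ * Real.exp (-((θ * a^i * t) * (a⁻¹)^n)))
      atTop (𝓝 0) := by
    have h1 := (hg0.const_mul (1 / θ^(γ+1))).const_mul ((if i = 0 then (1:ℝ) else 0) - 1)
    have h2 := hBtends.const_mul κ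
    have h3 := h1.sub h2
    simpa using h3
  refine Tendsto.congr' ?_ hcomb
  filter_upwards [eventually_ge_atTop (max (U / (θ * a^i)) 1)] with t hT
  exact (hfinal t hT).symm
end

section
/- Let N ≥ 2 be an integer, c ∈ (0,1), σ > 0, and set a = c/N, b = (N²/c − 1)/(N − 1), θ = σb, γ = log c / log(N/c) (so that a^{γ+1} = 1/N and −1 < γ < 0), and κ = (N−1)/θ^{γ+1}. For an integer i ≥ 0 let p_t(i) = N^{−i}(δ_{0i} − 1)e^{−θ a^i t} + (N − 1) Σ_{j=i+1}^∞ N^{−j} e^{−θ a^j t} for t > 0, where δ_{0i} = 1 if i = 0 and 0 otherwise. Then for every integer i ≥ 0, lim_{t→∞} ( t^γ ∫_0^t p_s(i) ds − κ · Σ_{j∈ℤ} (θ a^j t)^γ (1 − e^{−θ a^j t}) ) = 0. -/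
open MeasureTheory Filter Topology

lemma aux_int_exp (μ t : ℝ) (hμ : μ ≠ 0) :
    ∫ s in (0:ℝ)..t, Real.exp (-(μ * s)) = (1 - Real.exp (-(μ * t))) / μ := by
  have h : ∀ s : ℝ, Real.exp (-(μ * s)) = Real.exp (-μ * s) := by intro s; ring_nf
  simp_rw [h]
  rw [intervalIntegral.integral_comp_mul_left Real.exp (neg_ne_zero.mpr hμ), integral_exp]
  rw [smul_eq_mul]
  rw [mul_zero, Real.exp_zero]
  have : -μ * t = -(μ * t) := by ring
  rw [this]
  field_simp
  ring

lemma aux_one_sub_exp_le (x : ℝ) : 1 - Real.exp (-x) ≤ x := by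
  have := Real.add_one_le_exp (-x); linarith

lemma aux_one_sub_exp_nonneg {x : ℝ} (hx : 0 ≤ x) : 0 ≤ 1 - Real.exp (-x) := by
  have : Real.exp (-x) ≤ 1 := Real.exp_le_one_iff.mpr (by linarith)
  linarith

lemma aux_one_sub_exp_le_one (x : ℝ) : 1 - Real.exp (-x) ≤ 1 := by
  have := Real.exp_pos (-x); linarith

theorem stmt12 (N : ℕ) (hN : 2 ≤ N) (c σ : ℝ) (hc0 : 0 < c) (hc1 : c < 1) (hσ : 0 < σ)
    (a b θ γ κ : ℝ)
    (ha : a = c / N) (hb : b = ((N:ℝ) ^ 2 / c - 1) / ((N:ℝ) - 1)) (hθ : θ = σ * b)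
    (hγ : γ = Real.log c / Real.log ((N:ℝ) / c))
    (hκ : κ = ((N:ℝ) - 1) / θ ^ (γ + 1))
    (p : ℕ → ℝ → ℝ)
    (hp : ∀ (i : ℕ), ∀ t > 0, p i t =
      ((N:ℝ) ^ i)⁻¹ * ((if i = 0 then (1:ℝ) else 0) - 1) * Real.exp (-(θ * a ^ i * t)) +
        ((N:ℝ) - 1) *
          ∑' j : ℕ, ((N:ℝ) ^ (i + 1 + j))⁻¹ * Real.exp (-(θ * a ^ (i + 1 + j) * t))) :
    ∀ i : ℕ, Tendsto (fun t : ℝ =>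
        t ^ γ * (∫ s in (0:ℝ)..t, p i s) -
          κ * ∑' j : ℤ, (θ * a ^ j * t) ^ γ * (1 - Real.exp (-(θ * a ^ j * t))))
      atTop (𝓝 0) := by
  intro i
  -- basic positivity facts
  have hN1 : (1:ℝ) < N := by exact_mod_cast Nat.lt_of_lt_of_le one_lt_two hN
  have hNpos : (0:ℝ) < N := lt_trans one_pos hN1
  have ha0 : 0 < a := by rw [ha]; positivity
  have ha1 : a < 1 := by rw [ha, div_lt_one hNpos]; linarith
  have hb0 : 0 < b := by
    rw [hb]
    apply div_pos
    · have h1 : (1:ℝ) < (N:ℝ)^2 := by nlinarith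
      have h2 : (N:ℝ)^2 < (N:ℝ)^2 / c := by
        rw [lt_div_iff₀ hc0]; nlinarith
      linarith
    · linarith
  have hθ0 : 0 < θ := by rw [hθ]; exact mul_pos hσ hb0
  have hNc1 : 1 < (N:ℝ)/c := by rw [lt_div_iff₀ hc0]; nlinarith
  have hγneg : γ < 0 :=
    hγ ▸ div_neg_of_neg_of_pos (Real.log_neg hc0 hc1) (Real.log_pos hNc1)
  -- key identity a ^ γ = c⁻¹
  have hkey : a ^ γ = c⁻¹ := by
    have ha' : Real.log a = -(Real.log ((N:ℝ)/c)) := by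
      rw [ha, ← Real.log_inv]
      congr 1
      field_simp
    rw [Real.rpow_def_of_pos ha0, ha', hγ]
    have hlogne : Real.log ((N:ℝ)/c) ≠ 0 := ne_of_gt (Real.log_pos hNc1)
    have h3 : -(Real.log ((N:ℝ)/c)) * (Real.log c / Real.log ((N:ℝ)/c)) = -Real.log c := by
      field_simp
    rw [h3, Real.exp_neg, Real.exp_log hc0]
  have haγ : ∀ j : ℤ, (a ^ j) ^ γ = (c ^ j)⁻¹ := by
    intro j
    rw [← Real.rpow_intCast a j, ← Real.rpow_mul ha0.le, mul_comm ((j:ℤ):ℝ) γ,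
      Real.rpow_mul ha0.le, hkey, Real.rpow_intCast, inv_zpow]
  have hθγpos : 0 < θ ^ γ := Real.rpow_pos_of_pos hθ0 γ
  have hκθ : κ * θ ^ γ = ((N:ℝ) - 1) / θ := by
    rw [hκ, Real.rpow_add_one hθ0.ne' γ]
    field_simp
  -- abbreviations and summability
  set Ai : ℝ := ((N:ℝ) ^ i)⁻¹ * ((if i = 0 then (1:ℝ) else 0) - 1) with hAi
  have hμpos : ∀ k : ℕ, 0 < θ * a ^ k := fun k => mul_pos hθ0 (pow_pos ha0 k)
  have hNinv1 : (N:ℝ)⁻¹ < 1 := inv_lt_one_of_one_lt₀ hN1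
  have hNinv0 : (0:ℝ) ≤ (N:ℝ)⁻¹ := by positivity
  have hgeoN : Summable (fun n : ℕ => ((N:ℝ)⁻¹) ^ n) := summable_geometric_of_lt_one hNinv0 hNinv1
  have hwsum : Summable (fun j : ℕ => ((N:ℝ) ^ (i + 1 + j))⁻¹) := by
    have h : (fun j : ℕ => ((N:ℝ) ^ (i + 1 + j))⁻¹) = fun j => ((N:ℝ)^(i+1))⁻¹ * ((N:ℝ)⁻¹)^j := by
      funext j; rw [pow_add, mul_inv, inv_pow]
    rw [h]; exact hgeoN.mul_left _
  have hexp_cont : ∀ k : ℕ, Continuous fun s : ℝ => Real.exp (-(θ * a ^ k * s)) := by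
    intro k; exact Real.continuous_exp.comp (continuous_const.mul continuous_id).neg
  have hIOc : ∀ (k : ℕ) (t : ℝ), 0 < t →
      ∫ s in Set.Ioc (0:ℝ) t, Real.exp (-(θ * a ^ k * s)) =
        (1 - Real.exp (-(θ * a ^ k * t))) / (θ * a ^ k) := by
    intro k t ht
    rw [← intervalIntegral.integral_of_le ht.le]
    exact aux_int_exp _ _ (hμpos k).ne'
  have hswap : ∀ t : ℝ, 0 < t →
      ∫ s in Set.Ioc (0:ℝ) t,
          (∑' j : ℕ, ((N:ℝ) ^ (i + 1 + j))⁻¹ * Real.exp (-(θ * a ^ (i + 1 + j) * s))) =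
        ∑' j : ℕ, ((N:ℝ) ^ (i + 1 + j))⁻¹ *
          ((1 - Real.exp (-(θ * a ^ (i + 1 + j) * t))) / (θ * a ^ (i + 1 + j))) := by
    intro t ht
    have hint : ∀ j : ℕ, Integrable
        (fun s => ((N:ℝ) ^ (i + 1 + j))⁻¹ * Real.exp (-(θ * a ^ (i + 1 + j) * s)))
        (volume.restrict (Set.Ioc (0:ℝ) t)) :=
      fun j => (continuous_const.mul (hexp_cont _)).integrableOn_Ioc
    have hval : ∀ j : ℕ, ∫ s in Set.Ioc (0:ℝ) t,
        ((N:ℝ) ^ (i + 1 + j))⁻¹ * Real.exp (-(θ * a ^ (i + 1 + j) * s)) =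
        ((N:ℝ) ^ (i + 1 + j))⁻¹ *
          ((1 - Real.exp (-(θ * a ^ (i + 1 + j) * t))) / (θ * a ^ (i + 1 + j))) := by
      intro j
      rw [integral_const_mul, hIOc (i+1+j) t ht]
    have hsum : Summable fun j : ℕ => ∫ s in Set.Ioc (0:ℝ) t,
        ‖((N:ℝ) ^ (i + 1 + j))⁻¹ * Real.exp (-(θ * a ^ (i + 1 + j) * s))‖ := by
      apply Summable.of_nonneg_of_le
        (fun j => integral_nonneg fun s => norm_nonneg _)
        (fun j => ?_) (hwsum.mul_right t)
      have hnorm : (fun s => ‖((N:ℝ) ^ (i + 1 + j))⁻¹ * Real.exp (-(θ * a ^ (i + 1 + j) * s))‖)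
          = fun s => ((N:ℝ) ^ (i + 1 + j))⁻¹ * Real.exp (-(θ * a ^ (i + 1 + j) * s)) := by
        funext s; exact Real.norm_of_nonneg (by positivity)
      rw [hnorm, hval j]
      have h1 : (1 - Real.exp (-(θ * a ^ (i + 1 + j) * t))) / (θ * a ^ (i + 1 + j)) ≤ t := by
        rw [div_le_iff₀ (hμpos _)]
        have := aux_one_sub_exp_le (θ * a ^ (i + 1 + j) * t)
        linarith
      have h2 : (0:ℝ) ≤ ((N:ℝ) ^ (i + 1 + j))⁻¹ := by positivity
      exact mul_le_mul_of_nonneg_left h1 h2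
    rw [← MeasureTheory.integral_tsum_of_summable_integral_norm hint hsum]
    exact tsum_congr hval
  have hInt : ∀ t : ℝ, 0 < t →
      ∫ s in (0:ℝ)..t, p i s =
        Ai * ((1 - Real.exp (-(θ * a ^ i * t))) / (θ * a ^ i)) +
          ((N:ℝ) - 1) * ∑' j : ℕ, ((N:ℝ) ^ (i + 1 + j))⁻¹ *
            ((1 - Real.exp (-(θ * a ^ (i + 1 + j) * t))) / (θ * a ^ (i + 1 + j))) := by
    intro t ht
    rw [intervalIntegral.integral_of_le ht.le,
      MeasureTheory.setIntegral_congr_fun measurableSet_Ioc (fun s hs => hp i s hs.1)]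
    have i1 : Integrable (fun s : ℝ => Ai * Real.exp (-(θ * a ^ i * s)))
        (volume.restrict (Set.Ioc (0:ℝ) t)) :=
      (continuous_const.mul (hexp_cont i)).integrableOn_Ioc
    have i2 : Integrable (fun s : ℝ => ((N:ℝ) - 1) *
        ∑' j : ℕ, ((N:ℝ) ^ (i + 1 + j))⁻¹ * Real.exp (-(θ * a ^ (i + 1 + j) * s)))
        (volume.restrict (Set.Ioc (0:ℝ) t)) := by
      apply Integrable.const_mul
      have hcont : ContinuousOn (fun s : ℝ =>
          ∑' j : ℕ, ((N:ℝ)^(i+1+j))⁻¹ * Real.exp (-(θ * a^(i+1+j) * s))) (Set.Icc 0 t) := by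
        apply continuousOn_tsum
          (fun j => (continuous_const.mul (hexp_cont _)).continuousOn) hwsum
        intro j s hs
        show ‖((N:ℝ)^(i+1+j))⁻¹ * Real.exp (-(θ * a^(i+1+j) * s))‖ ≤ _
        rw [Real.norm_of_nonneg (by positivity)]
        have h1 : Real.exp (-(θ * a ^ (i + 1 + j) * s)) ≤ 1 :=
          Real.exp_le_one_iff.mpr
            (neg_nonpos.mpr (mul_nonneg (hμpos (i+1+j)).le hs.1))
        have h2 : (0:ℝ) ≤ ((N:ℝ) ^ (i + 1 + j))⁻¹ := by positivity
        calc ((N:ℝ)^(i+1+j))⁻¹ * Real.exp (-(θ * a^(i+1+j) * s))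
            ≤ ((N:ℝ)^(i+1+j))⁻¹ * 1 := mul_le_mul_of_nonneg_left h1 h2
          _ = _ := mul_one _
      exact (hcont.integrableOn_Icc).mono_set Set.Ioc_subset_Icc_self
    rw [MeasureTheory.integral_add i1 i2]
    congr 1
    · rw [integral_const_mul, hIOc i t ht]
    · rw [integral_const_mul, hswap t ht]
  -- identities relating powers of N, c, a
  have hack : ∀ k : ℕ, ∀ x : ℝ, ((N:ℝ) ^ k)⁻¹ * (x / (θ * a ^ k)) = θ⁻¹ * ((c ^ k)⁻¹ * x) := by
    intro k x
    rw [ha, div_pow]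
    field_simp
  have hack2 : ∀ k : ℕ, (c ^ k)⁻¹ * a ^ k = ((N:ℝ)⁻¹) ^ k := by
    intro k
    rw [ha, div_pow, inv_pow]
    field_simp
  have hc2 : ∀ n : ℕ, ((c:ℝ) ^ ((i:ℤ) - n))⁻¹ = (c ^ i)⁻¹ * c ^ n := by
    intro n
    rw [← zpow_neg, neg_sub, zpow_sub₀ hc0.ne', zpow_natCast, zpow_natCast, div_eq_mul_inv]
    ring
  -- the two series
  have hS1sum : ∀ t : ℝ, 0 < t → Summable (fun n : ℕ =>
      (c ^ (i+1+n))⁻¹ * (1 - Real.exp (-(θ * a ^ (i+1+n) * t)))) := by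
    intro t ht
    have hbd : Summable (fun n : ℕ => θ * t * ((N:ℝ)⁻¹)^(i+1) * ((N:ℝ)⁻¹)^n) :=
      hgeoN.mul_left _
    apply Summable.of_nonneg_of_le
      (fun n => mul_nonneg (by positivity)
        (aux_one_sub_exp_nonneg (mul_nonneg (hμpos _).le ht.le)))
      (fun n => ?_) hbd
    calc (c ^ (i+1+n))⁻¹ * (1 - Real.exp (-(θ * a ^ (i+1+n) * t)))
        ≤ (c ^ (i+1+n))⁻¹ * (θ * a ^ (i+1+n) * t) :=
          mul_le_mul_of_nonneg_left (aux_one_sub_exp_le _) (by positivity)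
      _ = θ * t * ((N:ℝ)⁻¹)^(i+1) * ((N:ℝ)⁻¹)^n := by
          rw [show (c ^ (i+1+n))⁻¹ * (θ * a ^ (i+1+n) * t)
              = θ * t * ((c ^ (i+1+n))⁻¹ * a ^ (i+1+n)) by ring, hack2, pow_add]
          ring
  have hS2sum : ∀ t : ℝ, 0 < t → Summable (fun n : ℕ =>
      ((c:ℝ) ^ ((i:ℤ) - n))⁻¹ * (1 - Real.exp (-(θ * a ^ ((i:ℤ) - n) * t)))) := by
    intro t ht
    apply Summable.of_nonneg_of_le
      (fun n => mul_nonneg (by positivity)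
        (aux_one_sub_exp_nonneg (mul_nonneg (mul_pos hθ0 (zpow_pos ha0 _)).le ht.le)))
      (fun n => ?_) ((summable_geometric_of_lt_one hc0.le hc1).mul_left ((c ^ i)⁻¹))
    calc ((c:ℝ) ^ ((i:ℤ) - n))⁻¹ * (1 - Real.exp (-(θ * a ^ ((i:ℤ) - n) * t)))
        ≤ ((c:ℝ) ^ ((i:ℤ) - n))⁻¹ * 1 :=
          mul_le_mul_of_nonneg_left (aux_one_sub_exp_le_one _) (by positivity)
      _ = (c ^ i)⁻¹ * c ^ n := by rw [mul_one, hc2]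
  -- the Z-sum splits
  have hZ : ∀ t : ℝ, 0 < t →
      (∑' j : ℤ, (θ * a ^ j * t) ^ γ * (1 - Real.exp (-(θ * a ^ j * t))))
        = θ ^ γ * t ^ γ *
          ((∑' n : ℕ, (c ^ (i+1+n))⁻¹ * (1 - Real.exp (-(θ * a ^ (i+1+n) * t)))) +
           (∑' n : ℕ, ((c:ℝ) ^ ((i:ℤ) - n))⁻¹ * (1 - Real.exp (-(θ * a ^ ((i:ℤ) - n) * t))))) := by
    intro t ht
    have h1 : ∀ j : ℤ, (θ * a ^ j * t) ^ γ * (1 - Real.exp (-(θ * a ^ j * t)))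
        = (θ ^ γ * t ^ γ) * ((c ^ j)⁻¹ * (1 - Real.exp (-(θ * a ^ j * t)))) := by
      intro j
      have haj : (0:ℝ) < a ^ j := zpow_pos ha0 j
      rw [Real.mul_rpow (mul_pos hθ0 haj).le ht.le, Real.mul_rpow hθ0.le haj.le, haγ j]
      ring
    rw [tsum_congr h1, tsum_mul_left]
    congr 1
    -- now split the ℤ-sum
    set g : ℤ → ℝ := fun j => (c ^ j)⁻¹ * (1 - Real.exp (-(θ * a ^ j * t))) with hg
    have hshiftA : ∀ n : ℕ, g ((n:ℤ) + ((i:ℤ) + 1))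
        = (c ^ (i+1+n))⁻¹ * (1 - Real.exp (-(θ * a ^ (i+1+n) * t))) := by
      intro n
      have : (n:ℤ) + ((i:ℤ) + 1) = ((i+1+n : ℕ) : ℤ) := by push_cast; ring
      rw [hg]
      simp only [this, zpow_natCast]
    have hshiftB : ∀ n : ℕ, g (-((n:ℤ) + 1) + ((i:ℤ) + 1))
        = ((c:ℝ) ^ ((i:ℤ) - n))⁻¹ * (1 - Real.exp (-(θ * a ^ ((i:ℤ) - n) * t))) := by
      intro n
      have : -((n:ℤ) + 1) + ((i:ℤ) + 1) = (i:ℤ) - n := by ring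
      rw [hg]
      simp only [this]
    have hsumA : Summable fun n : ℕ => g ((n:ℤ) + ((i:ℤ) + 1)) := by
      apply (hS1sum t ht).congr
      intro n; exact (hshiftA n).symm
    have hsumB : Summable fun n : ℕ => g (-((n:ℤ) + 1) + ((i:ℤ) + 1)) := by
      apply (hS2sum t ht).congr
      intro n; exact (hshiftB n).symm
    calc ∑' j : ℤ, g j
        = ∑' j : ℤ, g (Equiv.addRight ((i:ℤ) + 1) j) :=
          ((Equiv.addRight ((i:ℤ) + 1)).tsum_eq g).symm
      _ = ∑' j : ℤ, g (j + ((i:ℤ) + 1)) := by rfl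
      _ = (∑' n : ℕ, g ((n:ℤ) + ((i:ℤ) + 1))) + ∑' n : ℕ, g (-((n:ℤ) + 1) + ((i:ℤ) + 1)) :=
          tsum_of_nat_of_neg_add_one hsumA hsumB
      _ = _ := by rw [tsum_congr hshiftA, tsum_congr hshiftB]
  -- bound on the lower series
  have hS2bound : ∀ t : ℝ, 0 < t →
      (∑' n : ℕ, ((c:ℝ) ^ ((i:ℤ) - n))⁻¹ * (1 - Real.exp (-(θ * a ^ ((i:ℤ) - n) * t))))
        ≤ (c ^ i)⁻¹ * (1 - c)⁻¹ := by
    intro t ht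
    have hbd : Summable (fun n : ℕ => (c ^ i)⁻¹ * c ^ n) :=
      (summable_geometric_of_lt_one hc0.le hc1).mul_left _
    calc (∑' n : ℕ, ((c:ℝ) ^ ((i:ℤ) - n))⁻¹ * (1 - Real.exp (-(θ * a ^ ((i:ℤ) - n) * t))))
        ≤ ∑' n : ℕ, (c ^ i)⁻¹ * c ^ n := by
          apply Summable.tsum_le_tsum ?_ (hS2sum t ht) hbd
          intro n
          calc ((c:ℝ) ^ ((i:ℤ) - n))⁻¹ * (1 - Real.exp (-(θ * a ^ ((i:ℤ) - n) * t)))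
              ≤ ((c:ℝ) ^ ((i:ℤ) - n))⁻¹ * 1 :=
                mul_le_mul_of_nonneg_left (aux_one_sub_exp_le_one _) (by positivity)
            _ = (c ^ i)⁻¹ * c ^ n := by rw [mul_one, hc2]
      _ = (c ^ i)⁻¹ * (1 - c)⁻¹ := by
          rw [tsum_mul_left, tsum_geometric_of_lt_one hc0.le hc1]
  have hS2nonneg : ∀ t : ℝ, 0 < t →
      0 ≤ ∑' n : ℕ, ((c:ℝ) ^ ((i:ℤ) - n))⁻¹ * (1 - Real.exp (-(θ * a ^ ((i:ℤ) - n) * t))) := by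
    intro t ht
    apply tsum_nonneg
    intro n
    exact mul_nonneg (by positivity)
      (aux_one_sub_exp_nonneg (mul_nonneg (mul_pos hθ0 (zpow_pos ha0 _)).le ht.le))
  have hAile : |Ai| ≤ 1 := by
    rw [hAi]
    rcases eq_or_ne i 0 with h | h
    · simp [h]
    · rw [if_neg h, zero_sub, mul_neg, mul_one, abs_neg, abs_of_nonneg (by positivity)]
      have h2 : (1:ℝ) ≤ (N:ℝ) ^ i := one_le_pow₀ hN1.le
      calc ((N:ℝ) ^ i)⁻¹ ≤ (1:ℝ)⁻¹ := by gcongr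
        _ = 1 := inv_one
  set C : ℝ := (θ * a ^ i)⁻¹ + (((N:ℝ) - 1)/θ) * ((c ^ i)⁻¹ * (1 - c)⁻¹) with hCdef
  apply squeeze_zero_norm' (a := fun t : ℝ => C * t ^ γ)
  · filter_upwards [eventually_gt_atTop (0:ℝ)] with t ht
    rw [hInt t ht, hZ t ht]
    have hconv : (∑' j : ℕ, ((N:ℝ) ^ (i + 1 + j))⁻¹ *
        ((1 - Real.exp (-(θ * a ^ (i + 1 + j) * t))) / (θ * a ^ (i + 1 + j))))
        = θ⁻¹ * ∑' n : ℕ, (c ^ (i+1+n))⁻¹ * (1 - Real.exp (-(θ * a ^ (i+1+n) * t))) := by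
      rw [← tsum_mul_left]
      exact tsum_congr fun j => hack _ _
    rw [hconv]
    set s1 : ℝ := ∑' n : ℕ, (c ^ (i+1+n))⁻¹ * (1 - Real.exp (-(θ * a ^ (i+1+n) * t))) with hs1
    set s2 : ℝ := ∑' n : ℕ,
      ((c:ℝ) ^ ((i:ℤ) - n))⁻¹ * (1 - Real.exp (-(θ * a ^ ((i:ℤ) - n) * t))) with hs2
    set q : ℝ := (1 - Real.exp (-(θ * a ^ i * t))) / (θ * a ^ i) with hq
    have heq : t ^ γ * (Ai * q + ((N:ℝ) - 1) * (θ⁻¹ * s1)) - κ * (θ ^ γ * t ^ γ * (s1 + s2))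
        = t ^ γ * (Ai * q - (((N:ℝ) - 1)/θ) * s2) := by
      linear_combination (-(t ^ γ) * (s1 + s2)) * hκθ
    rw [heq, Real.norm_eq_abs, abs_mul, abs_of_nonneg (Real.rpow_nonneg ht.le γ)]
    have hqnn : 0 ≤ q := by
      rw [hq]
      exact div_nonneg (aux_one_sub_exp_nonneg (mul_nonneg (hμpos i).le ht.le)) (hμpos i).le
    have hqle : q ≤ (θ * a ^ i)⁻¹ := by
      rw [hq, div_le_iff₀ (hμpos i), inv_mul_cancel₀ (hμpos i).ne']
      exact aux_one_sub_exp_le_one _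
    have hfrac : (0:ℝ) ≤ ((N:ℝ) - 1)/θ := div_nonneg (by linarith) hθ0.le
    have hX : |Ai * q - (((N:ℝ) - 1)/θ) * s2| ≤ C := by
      have t1 : |Ai * q| ≤ (θ * a ^ i)⁻¹ := by
        rw [abs_mul, abs_of_nonneg hqnn]
        calc |Ai| * q ≤ 1 * ((θ * a ^ i)⁻¹) :=
              mul_le_mul hAile hqle hqnn zero_le_one
          _ = (θ * a ^ i)⁻¹ := one_mul _
      have t2 : |(((N:ℝ) - 1)/θ) * s2| ≤ (((N:ℝ) - 1)/θ) * ((c ^ i)⁻¹ * (1 - c)⁻¹) := by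
        rw [abs_mul, abs_of_nonneg hfrac, abs_of_nonneg (hS2nonneg t ht)]
        exact mul_le_mul_of_nonneg_left (hS2bound t ht) hfrac
      calc |Ai * q - (((N:ℝ) - 1)/θ) * s2|
          ≤ |Ai * q| + |(((N:ℝ) - 1)/θ) * s2| := by
            rw [sub_eq_add_neg]
            exact (abs_add_le _ _).trans (by rw [abs_neg])
        _ ≤ C := by rw [hCdef]; exact add_le_add t1 t2
    calc t ^ γ * |Ai * q - (((N:ℝ) - 1)/θ) * s2|
        ≤ t ^ γ * C := mul_le_mul_of_nonneg_left hX (Real.rpow_nonneg ht.le γ)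
      _ = C * t ^ γ := mul_comm _ _
  · have h := (tendsto_rpow_neg_atTop (neg_pos.mpr hγneg)).const_mul C
    simpa using h
end

section
/- Let a ∈ (0,1). Then lim_{t→∞} ( Σ_{j=1}^∞ (1 − e^{−a^j t}) ) / log t = −1/log a. (The series converges for every t > 0.) -/
/-!
Write `s = log t` and `L = -log a`. The `j`-th term `1 - exp (-(a ^ (j + 1) t))` is close to `1`
while `a ^ (j + 1) t` is large, i.e. for `j ≲ s / L`, and is bounded by the geometric sequence
`a ^ (j + 1) t` afterwards. Cutting the series at `⌈s / L⌉` gives `G ≤ s / L + O(1)`; keeping only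
the first `⌊(s - log s) / L⌋` terms, each at least `1 - exp (-s)`, gives `G ≥ s / L - o(s)`.
-/

open Filter Topology Real

/-- The truncated Green kernel `G_t` of the critical hierarchical random walk. -/
noncomputable def greenSum (a t : ℝ) : ℝ :=
  ∑' j : ℕ, (1 - exp (-(a ^ (j + 1) * t)))

lemma one_sub_exp_neg_nonneg {x : ℝ} (hx : 0 ≤ x) : 0 ≤ 1 - exp (-x) := by
  have : exp (-x) ≤ 1 := exp_le_one_iff.2 (by linarith)
  linarith

lemma one_sub_exp_neg_le_self (x : ℝ) : 1 - exp (-x) ≤ x := by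
  linarith [one_sub_le_exp_neg x]

lemma summable_one_sub_exp_neg_pow_mul {a t : ℝ} (ha0 : 0 < a) (ha1 : a < 1) (ht : 0 ≤ t) :
    Summable fun j : ℕ => 1 - exp (-(a ^ (j + 1) * t)) := by
  refine Summable.of_nonneg_of_le (fun j => one_sub_exp_neg_nonneg (by positivity))
    (fun j => (one_sub_exp_neg_le_self _).trans_eq (by ring))
    ((summable_geometric_of_lt_one ha0.le ha1).mul_right (a * t))

lemma pow_mul_exp_eq_exp_add {a : ℝ} (ha : 0 < a) (n : ℕ) (s : ℝ) :
    a ^ n * exp s = exp (s + n * log a) := by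
  rw [exp_add, exp_nat_mul, exp_log ha, mul_comm]

lemma greenSum_le_of_pow_mul_le_one {a t : ℝ} (ha0 : 0 < a) (ha1 : a < 1) (ht : 0 ≤ t) {N : ℕ}
    (hN : a ^ N * t ≤ 1) : greenSum a t ≤ N + a / (1 - a) := by
  have hsum := summable_one_sub_exp_neg_pow_mul ha0 ha1 ht
  have hgeom : Summable fun j : ℕ => a * a ^ j :=
    (summable_geometric_of_lt_one ha0.le ha1).mul_left a
  have hhead : ∑ j ∈ Finset.range N, (1 - exp (-(a ^ (j + 1) * t))) ≤ N := by
    calc ∑ j ∈ Finset.range N, (1 - exp (-(a ^ (j + 1) * t)))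
        ≤ ∑ _j ∈ Finset.range N, (1 : ℝ) :=
          Finset.sum_le_sum fun j _ => by linarith [exp_pos (-(a ^ (j + 1) * t))]
      _ = N := by simp
  have htail : ∑' j : ℕ, (1 - exp (-(a ^ (j + N + 1) * t))) ≤ a / (1 - a) := by
    calc ∑' j : ℕ, (1 - exp (-(a ^ (j + N + 1) * t)))
        ≤ ∑' j : ℕ, a * a ^ j := by
          refine Summable.tsum_le_tsum (fun j => ?_) ((summable_nat_add_iff N).2 hsum) hgeom
          calc 1 - exp (-(a ^ (j + N + 1) * t)) ≤ a ^ (j + N + 1) * t := one_sub_exp_neg_le_self _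
            _ = a * a ^ j * (a ^ N * t) := by ring
            _ ≤ a * a ^ j := mul_le_of_le_one_right (by positivity) hN
      _ = a / (1 - a) := by rw [tsum_mul_left, tsum_geometric_of_lt_one ha0.le ha1, div_eq_mul_inv]
  rw [greenSum, ← hsum.sum_add_tsum_nat_add N]
  exact add_le_add hhead htail

lemma mul_one_sub_exp_neg_le_greenSum {a t x : ℝ} (ha0 : 0 < a) (ha1 : a < 1) (ht : 0 ≤ t)
    {K : ℕ} (hK : x ≤ a ^ K * t) : K * (1 - exp (-x)) ≤ greenSum a t := by
  have hterm : ∀ j ∈ Finset.range K, 1 - exp (-x) ≤ 1 - exp (-(a ^ (j + 1) * t)) := by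
    intro j hj
    have hpow : a ^ K ≤ a ^ (j + 1) :=
      pow_le_pow_of_le_one ha0.le ha1.le (Finset.mem_range.1 hj)
    have : x ≤ a ^ (j + 1) * t := hK.trans (mul_le_mul_of_nonneg_right hpow ht)
    linarith [exp_le_exp.2 (neg_le_neg this)]
  calc (K : ℝ) * (1 - exp (-x)) = ∑ _j ∈ Finset.range K, (1 - exp (-x)) := by
        rw [Finset.sum_const, Finset.card_range, nsmul_eq_mul]
    _ ≤ ∑ j ∈ Finset.range K, (1 - exp (-(a ^ (j + 1) * t))) := Finset.sum_le_sum hterm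
    _ ≤ greenSum a t :=
      (summable_one_sub_exp_neg_pow_mul ha0 ha1 ht).sum_le_tsum _
        fun j _ => one_sub_exp_neg_nonneg (by positivity)

lemma greenSum_exp_le {a s : ℝ} (ha0 : 0 < a) (ha1 : a < 1) (hs : 0 ≤ s) :
    greenSum a (exp s) ≤ s / -log a + 1 + a / (1 - a) := by
  have hL : 0 < -log a := neg_pos.2 (log_neg ha0 ha1)
  set N := ⌈s / -log a⌉₊
  have hN : s ≤ N * -log a := (div_le_iff₀ hL).1 (Nat.le_ceil _)
  have hpow : a ^ N * exp s ≤ 1 := by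
    rw [pow_mul_exp_eq_exp_add ha0, exp_le_one_iff]
    linarith
  have hNle : (N : ℝ) ≤ s / -log a + 1 := (Nat.ceil_lt_add_one (by positivity)).le
  linarith [greenSum_le_of_pow_mul_le_one ha0 ha1 (exp_pos s).le hpow]

lemma le_greenSum_exp {a s : ℝ} (ha0 : 0 < a) (ha1 : a < 1) (hs : 0 < s) :
    ((s - log s) / -log a - 1) * (1 - exp (-s)) ≤ greenSum a (exp s) := by
  have hL : 0 < -log a := neg_pos.2 (log_neg ha0 ha1)
  have hlog : log s ≤ s := (log_le_sub_one_of_pos hs).trans (by linarith)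
  set K := ⌊(s - log s) / -log a⌋₊
  have hK : K * -log a ≤ s - log s :=
    (le_div_iff₀ hL).1 (Nat.floor_le (div_nonneg (by linarith) hL.le))
  have hpow : s ≤ a ^ K * exp s := by
    rw [pow_mul_exp_eq_exp_add ha0]
    calc s = exp (log s) := (exp_log hs).symm
      _ ≤ _ := exp_le_exp.2 (by linarith)
  calc ((s - log s) / -log a - 1) * (1 - exp (-s))
      ≤ K * (1 - exp (-s)) :=
        mul_le_mul_of_nonneg_right (Nat.sub_one_lt_floor _).le (one_sub_exp_neg_nonneg hs.le)
    _ ≤ greenSum a (exp s) :=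
        mul_one_sub_exp_neg_le_greenSum ha0 ha1 (exp_pos s).le hpow

lemma tendsto_greenSum_exp_div {a : ℝ} (ha0 : 0 < a) (ha1 : a < 1) :
    Tendsto (fun s => greenSum a (exp s) / s) atTop (𝓝 (1 / -log a)) := by
  set L := -log a
  have hlogdiv : Tendsto (fun s => log s / s) atTop (𝓝 0) := by
    simpa using tendsto_pow_log_div_mul_add_atTop 1 0 1 one_ne_zero
  have hlower : Tendsto (fun s => ((1 - log s / s) / L - s⁻¹) * (1 - exp (-s))) atTop
      (𝓝 (((1 - 0) / L - 0) * (1 - 0))) :=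
    (((tendsto_const_nhds.sub hlogdiv).div_const L).sub tendsto_inv_atTop_zero).mul
      (tendsto_const_nhds.sub (tendsto_exp_atBot.comp tendsto_neg_atTop_atBot))
  have hupper : Tendsto (fun s => 1 / L + (1 + a / (1 - a)) * s⁻¹) atTop
      (𝓝 (1 / L + (1 + a / (1 - a)) * 0)) :=
    tendsto_const_nhds.add (tendsto_inv_atTop_zero.const_mul _)
  simp only [sub_zero, mul_one, mul_zero, add_zero] at hlower hupper
  refine tendsto_of_tendsto_of_tendsto_of_le_of_le' hlower hupper ?_ ?_
  · filter_upwards [eventually_gt_atTop 0] with s hs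
    calc ((1 - log s / s) / L - s⁻¹) * (1 - exp (-s))
        = ((s - log s) / L - 1) * (1 - exp (-s)) / s := by field_simp
      _ ≤ greenSum a (exp s) / s := by
        gcongr
        exact le_greenSum_exp ha0 ha1 hs
  · filter_upwards [eventually_gt_atTop 0] with s hs
    calc greenSum a (exp s) / s ≤ (s / L + 1 + a / (1 - a)) / s := by
          gcongr
          exact greenSum_exp_le ha0 ha1 hs.le
      _ = 1 / L + (1 + a / (1 - a)) * s⁻¹ := by field_simp; ring

theorem stmt13 (a : ℝ) (ha0 : 0 < a) (ha1 : a < 1) :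
    (∀ t > 0, Summable (fun j : ℕ => 1 - Real.exp (-(a ^ (j + 1) * t)))) ∧
    Tendsto (fun t : ℝ => (∑' j : ℕ, (1 - Real.exp (-(a ^ (j + 1) * t)))) / Real.log t)
      atTop (𝓝 (-1 / Real.log a)) := by
  refine ⟨fun t ht => summable_one_sub_exp_neg_pow_mul ha0 ha1 ht.le, ?_⟩
  rw [show -1 / log a = 1 / -log a by rw [div_neg, neg_div]]
  refine ((tendsto_greenSum_exp_div ha0 ha1).comp tendsto_log_atTop).congr' ?_
  filter_upwards [eventually_gt_atTop 0] with t ht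
  simp [greenSum, exp_log ht]
end

section
/- Let a ∈ (0,1). Then lim_{t→∞} ( Σ_{j=1}^∞ (1 − e^{−a^j t})² ) / log t = −1/log a. (The series converges for every t > 0.) -/
/-!
Write `g x = (1 - exp (-x))²` and let `n` be the index at which `a ^ n * t` crosses `1`. The terms
with `j < n` differ from `1` by at most `2 exp (-(a ^ (n - 1 - j))⁻¹)`, a summable error, while the
terms with `j ≥ n` are bounded by `g x ≤ x²` with `x ≤ a ^ (j - n)`. Hence the series equals
`n + O(1) = log t / (-log a) + O(1)`.
-/

open Filter Topology Asymptotics Real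

variable {a t : ℝ}

noncomputable def sqOneSubExpNeg (x : ℝ) : ℝ := (1 - exp (-x)) ^ 2

lemma sqOneSubExpNeg_nonneg (x : ℝ) : 0 ≤ sqOneSubExpNeg x := sq_nonneg _

lemma sqOneSubExpNeg_le_sq {x : ℝ} (hx : 0 ≤ x) : sqOneSubExpNeg x ≤ x ^ 2 := by
  have h₀ : 0 ≤ 1 - exp (-x) := by linarith [exp_le_one_iff.mpr (neg_nonpos.mpr hx)]
  have h₁ : 1 - exp (-x) ≤ x := by linarith [add_one_le_exp (-x)]
  exact pow_le_pow_left₀ h₀ h₁ 2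

lemma sqOneSubExpNeg_le_one {x : ℝ} (hx : 0 ≤ x) : sqOneSubExpNeg x ≤ 1 := by
  have h₀ : exp (-x) ≤ 1 := exp_le_one_iff.mpr (neg_nonpos.mpr hx)
  unfold sqOneSubExpNeg
  nlinarith [exp_pos (-x)]

lemma one_sub_two_mul_exp_neg_le_sqOneSubExpNeg (x : ℝ) :
    1 - 2 * exp (-x) ≤ sqOneSubExpNeg x := by
  unfold sqOneSubExpNeg
  nlinarith [sq_nonneg (exp (-x))]

lemma summable_sqOneSubExpNeg_geometric (ha0 : 0 ≤ a) (ha1 : a < 1) {s : ℝ}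
    (hs : 0 ≤ s) : Summable fun j : ℕ => sqOneSubExpNeg (a ^ j * s) := by
  have ha2 : a ^ 2 < 1 := pow_lt_one₀ ha0 ha1 two_ne_zero
  refine ((summable_geometric_of_lt_one (sq_nonneg a) ha2).mul_left (s ^ 2)).of_nonneg_of_le
    (fun j => sqOneSubExpNeg_nonneg _) fun j => ?_
  calc sqOneSubExpNeg (a ^ j * s) ≤ (a ^ j * s) ^ 2 := sqOneSubExpNeg_le_sq (by positivity)
    _ = s ^ 2 * (a ^ 2) ^ j := by ring

lemma tsum_sqOneSubExpNeg_geometric_le (ha0 : 0 ≤ a) (ha1 : a < 1) {s : ℝ}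
    (hs0 : 0 ≤ s) (hs1 : s ≤ 1) : ∑' j : ℕ, sqOneSubExpNeg (a ^ j * s) ≤ (1 - a ^ 2)⁻¹ := by
  have ha2 : a ^ 2 < 1 := pow_lt_one₀ ha0 ha1 two_ne_zero
  rw [← tsum_geometric_of_lt_one (sq_nonneg a) ha2]
  refine (summable_sqOneSubExpNeg_geometric ha0 ha1 hs0).tsum_le_tsum (fun j => ?_)
    (summable_geometric_of_lt_one (sq_nonneg a) ha2)
  calc sqOneSubExpNeg (a ^ j * s) ≤ (a ^ j * s) ^ 2 := sqOneSubExpNeg_le_sq (by positivity)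
    _ ≤ (a ^ j * 1) ^ 2 := by gcongr
    _ = (a ^ 2) ^ j := by ring

-- `exp y ≥ y` gives `exp (-(a ^ m)⁻¹) ≤ a ^ m`.
lemma summable_exp_neg_inv_pow (ha0 : 0 < a) (ha1 : a < 1) :
    Summable fun m : ℕ => exp (-(a ^ m)⁻¹) := by
  refine (summable_geometric_of_lt_one ha0.le ha1).of_nonneg_of_le (fun m => (exp_pos _).le)
    fun m => ?_
  have hpos : 0 < a ^ m := pow_pos ha0 m
  rw [exp_neg, inv_le_comm₀ (exp_pos _) hpos]
  linarith [add_one_le_exp (a ^ m)⁻¹]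

lemma summable_sqOneSubExpNeg_pow_succ_mul (ha0 : 0 ≤ a) (ha1 : a < 1) (ht : 0 ≤ t) :
    Summable fun j : ℕ => sqOneSubExpNeg (a ^ (j + 1) * t) := by
  simpa only [pow_succ, mul_assoc] using
    summable_sqOneSubExpNeg_geometric ha0 ha1 (mul_nonneg ha0 ht)

lemma tsum_sqOneSubExpNeg_le_of_pow_succ_mul_le_one (ha0 : 0 ≤ a) (ha1 : a < 1) (ht : 0 ≤ t)
    {n : ℕ} (hn : a ^ (n + 1) * t ≤ 1) :
    ∑' j : ℕ, sqOneSubExpNeg (a ^ (j + 1) * t) ≤ n + (1 - a ^ 2)⁻¹ := by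
  rw [← (summable_sqOneSubExpNeg_pow_succ_mul ha0 ha1 ht).sum_add_tsum_nat_add n]
  have hhead : ∑ j ∈ Finset.range n, sqOneSubExpNeg (a ^ (j + 1) * t) ≤ n := by
    simpa using Finset.sum_le_sum fun j (_ : j ∈ Finset.range n) =>
      sqOneSubExpNeg_le_one (by positivity : 0 ≤ a ^ (j + 1) * t)
  have htail : ∑' i : ℕ, sqOneSubExpNeg (a ^ (i + n + 1) * t) ≤ (1 - a ^ 2)⁻¹ := by
    simpa only [add_assoc, pow_add, mul_assoc] using
      tsum_sqOneSubExpNeg_geometric_le ha0 ha1 (by positivity) hn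
  linarith

lemma le_tsum_sqOneSubExpNeg_of_one_le_pow_mul (ha0 : 0 < a) (ha1 : a < 1) (ht : 0 ≤ t)
    {n : ℕ} (hn : 1 ≤ a ^ n * t) :
    n - 2 * ∑' m : ℕ, exp (-(a ^ m)⁻¹) ≤ ∑' j : ℕ, sqOneSubExpNeg (a ^ (j + 1) * t) := by
  have hterm : ∀ j ∈ Finset.range n,
      1 - 2 * exp (-(a ^ (n - 1 - j))⁻¹) ≤ sqOneSubExpNeg (a ^ (j + 1) * t) := by
    intro j hj
    refine le_trans ?_ (one_sub_two_mul_exp_neg_le_sqOneSubExpNeg _)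
    have hsplit : a ^ n = a ^ (j + 1) * a ^ (n - 1 - j) := by
      rw [← pow_add]; congr 1; have := Finset.mem_range.mp hj; omega
    have : (a ^ (n - 1 - j))⁻¹ ≤ a ^ (j + 1) * t := by
      rw [inv_le_iff_one_le_mul₀ (pow_pos ha0 _)]
      linarith [hsplit ▸ hn]
    gcongr
  have hexp : ∑ m ∈ Finset.range n, exp (-(a ^ m)⁻¹) ≤ ∑' m : ℕ, exp (-(a ^ m)⁻¹) :=
    (summable_exp_neg_inv_pow ha0 ha1).sum_le_tsum _ fun m _ => (exp_pos _).le
  calc (n : ℝ) - 2 * ∑' m : ℕ, exp (-(a ^ m)⁻¹)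
      ≤ ∑ j ∈ Finset.range n, (1 - 2 * exp (-(a ^ (n - 1 - j))⁻¹)) := by
        rw [Finset.sum_sub_distrib, ← Finset.mul_sum,
          Finset.sum_range_reflect (fun m => exp (-(a ^ m)⁻¹)) n]
        simp only [Finset.sum_const, Finset.card_range, nsmul_eq_mul, mul_one]
        linarith
    _ ≤ ∑ j ∈ Finset.range n, sqOneSubExpNeg (a ^ (j + 1) * t) := Finset.sum_le_sum hterm
    _ ≤ ∑' j : ℕ, sqOneSubExpNeg (a ^ (j + 1) * t) :=
        (summable_sqOneSubExpNeg_pow_succ_mul ha0.le ha1 ht).sum_le_tsum _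
          fun j _ => sqOneSubExpNeg_nonneg _

lemma exists_nat_pow_mul_bracket_of_one_le (ha0 : 0 < a) (ha1 : a < 1) (ht : 1 ≤ t) :
    ∃ n : ℕ, 1 ≤ a ^ n * t ∧ a ^ (n + 1) * t ≤ 1 ∧
      (n : ℝ) ≤ (-log a)⁻¹ * log t ∧ (-log a)⁻¹ * log t ≤ n + 1 := by
  obtain ⟨n, hn, hn'⟩ := exists_nat_pow_near ht ((one_lt_inv₀ ha0).mpr ha1)
  have hloga : 0 < -log a := neg_pos.mpr (log_neg ha0 ha1)
  have hlog : ∀ k : ℕ, log (a⁻¹ ^ k) = -log a * k := fun k => by rw [log_pow, log_inv, mul_comm]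
  refine ⟨n, ?_, ?_, ?_, ?_⟩
  · rwa [inv_pow, inv_le_iff_one_le_mul₀ (pow_pos ha0 n), mul_comm] at hn
  · rw [inv_pow, ← mul_one (a ^ (n + 1))⁻¹, lt_inv_mul_iff₀ (pow_pos ha0 _)] at hn'
    exact hn'.le
  · rw [le_inv_mul_iff₀ hloga, ← hlog]
    exact log_le_log (by positivity) hn
  · rw [inv_mul_le_iff₀ hloga, ← Nat.cast_add_one, ← hlog]
    exact log_le_log (by positivity) hn'.le

lemma isBigO_tsum_sqOneSubExpNeg_sub_log (ha0 : 0 < a) (ha1 : a < 1) :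
    (fun t => ∑' j : ℕ, sqOneSubExpNeg (a ^ (j + 1) * t) - (-log a)⁻¹ * log t)
      =O[atTop] fun _ => (1 : ℝ) := by
  set E := ∑' m : ℕ, exp (-(a ^ m)⁻¹)
  have hE : 0 ≤ E := tsum_nonneg fun m => (exp_pos _).le
  have hD : 0 ≤ (1 - a ^ 2)⁻¹ := inv_nonneg.mpr (by nlinarith)
  refine IsBigO.of_bound (1 + 2 * E + (1 - a ^ 2)⁻¹) ?_
  filter_upwards [eventually_ge_atTop 1] with t ht
  obtain ⟨n, hn, hn', hlog, hlog'⟩ := exists_nat_pow_mul_bracket_of_one_le ha0 ha1 ht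
  have hlow := le_tsum_sqOneSubExpNeg_of_one_le_pow_mul ha0 ha1 (by linarith) hn
  have hup := tsum_sqOneSubExpNeg_le_of_pow_succ_mul_le_one ha0.le ha1 (by linarith) hn'
  rw [norm_one, mul_one, norm_eq_abs, abs_sub_le_iff]
  constructor <;> linarith

lemma tendsto_div_log_of_isBigO_sub_mul_log {u : ℝ → ℝ} {c : ℝ}
    (h : (fun t => u t - c * log t) =O[atTop] fun _ => (1 : ℝ)) :
    Tendsto (fun t => u t / log t) atTop (𝓝 c) := by
  have hinv : Tendsto (fun t => (log t)⁻¹) atTop (𝓝 0) :=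
    tendsto_inv_atTop_zero.comp tendsto_log_atTop
  have hrem : Tendsto (fun t => (u t - c * log t) * (log t)⁻¹) atTop (𝓝 0) := by
    simpa using (h.mul (isBigO_refl _ atTop)).trans_tendsto (by simpa using hinv)
  refine (by simpa using hrem.const_add c : Tendsto _ atTop (𝓝 c)).congr' ?_
  filter_upwards [eventually_gt_atTop 1] with t ht
  have : log t ≠ 0 := (log_pos ht).ne'
  field_simp
  ring

theorem stmt14 (a : ℝ) (ha0 : 0 < a) (ha1 : a < 1) :
    (∀ t > 0, Summable (fun j : ℕ => (1 - Real.exp (-(a ^ (j + 1) * t))) ^ 2)) ∧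
    Tendsto (fun t : ℝ => (∑' j : ℕ, (1 - Real.exp (-(a ^ (j + 1) * t))) ^ 2) / Real.log t)
      atTop (𝓝 (-1 / Real.log a)) := by
  refine ⟨fun t ht => summable_sqOneSubExpNeg_pow_succ_mul ha0.le ha1 ht.le, ?_⟩
  rw [neg_div, ← div_neg, one_div]
  exact tendsto_div_log_of_isBigO_sub_mul_log (isBigO_tsum_sqOneSubExpNeg_sub_log ha0 ha1)
end

section
/- Let N ≥ 2 be an integer, c ∈ (0,N), σ > 0, and set a = c/N, b = (N²/c − 1)/(N − 1), θ = σb. For an integer i ≥ 0 let p_t(i) = N^{−i}(δ_{0i} − 1)e^{−θ a^i t} + (N − 1) Σ_{j=i+1}^∞ N^{−j} e^{−θ a^j t} for t > 0, where δ_{0i} = 1 if i = 0 and 0 otherwise. Let j ≥ 1 be an integer with c^j > N^{j−1}. Then for every integer i ≥ 0 the integral (1/(j−1)!) ∫_0^∞ t^{j−1} p_t(i) dt converges absolutely and equals ((N−1)/(σ(N²/c − 1)))^j · [ δ_{0i} − 1 + (N−1)N^{j−1}/(c^j − N^{j−1}) ] · (N^{j−1}/c^j)^i. -/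
/-!
Each exponential has moment `∫₀^∞ t^q e^{-λt} dt = q!/λ^(q+1)`, and the absolute moments of the
terms of `p_t(i)` are summable, so the moment of `p_t(i)` may be taken term by term. With rates
`λ_m = θ a^m` and masses `N^{-m}`, the `m`-th term contributes `q! θ^{-(q+1)} r^m` with
`r = (N a^(q+1))⁻¹ = N^q / c^(q+1)`, which is `< 1` exactly when `c^j > N^(j-1)` (`j = q + 1`);
the tail over `m > i` is then a geometric series.
-/

open MeasureTheory Filter Topology

open scoped Nat ENNReal

theorem integrable_tsum_of_summable_integral_norm {α E ι : Type*} [MeasurableSpace α]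
    {μ : Measure α} [NormedAddCommGroup E] [CompleteSpace E] [Countable ι] {F : ι → α → E}
    (hF_int : ∀ i, Integrable (F i) μ) (hF_sum : Summable fun i ↦ ∫ a, ‖F i a‖ ∂μ) :
    Integrable (fun a ↦ ∑' i, F i a) μ := by
  set f : ι → α →₁[μ] E := fun i ↦ (hF_int i).toL1 (F i)
  have hf : ∑' i, ‖f i‖ₑ ≠ ∞ := by
    refine tsum_enorm_ne_top_iff_summable_norm.2 (hF_sum.congr fun i ↦ ?_)
    exact (L1.norm_of_fun_eq_integral_norm (hF_int i)).symm
  have hcoe : ⇑(∑' i, f i) =ᵐ[μ] fun a ↦ ∑' i, F i a := by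
    filter_upwards [Lp.coeFn_tsum hf, ae_all_iff.2 fun i ↦ (hF_int i).coeFn_toL1]
      with a hsum hterm
    rw [hsum]
    exact tsum_congr hterm
  exact (L1.integrable_coeFn _).congr hcoe

theorem integrableOn_pow_mul_exp_neg_mul_Ioi (q : ℕ) {l : ℝ} (hl : 0 < l) :
    IntegrableOn (fun t : ℝ ↦ t ^ q * Real.exp (-(l * t))) (Set.Ioi 0) := by
  refine (integrableOn_rpow_mul_exp_neg_mul_rpow (p := 1) (s := q)
    (neg_one_lt_zero.trans_le q.cast_nonneg) one_pos hl).congr_fun (fun t _ ↦ ?_)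
    measurableSet_Ioi
  simp only [Real.rpow_one, Real.rpow_natCast, neg_mul]

theorem integral_pow_mul_exp_neg_mul_Ioi (q : ℕ) {l : ℝ} (hl : 0 < l) :
    ∫ t in Set.Ioi (0:ℝ), t ^ q * Real.exp (-(l * t)) = q ! / l ^ (q + 1) := by
  have h := Real.integral_rpow_mul_exp_neg_mul_Ioi (a := q + 1) (by positivity) hl
  rw [add_sub_cancel_right, Real.Gamma_nat_eq_factorial, ← Nat.cast_succ, Real.rpow_natCast,
    one_div, inv_pow, ← div_eq_inv_mul] at h
  rw [← h]
  exact setIntegral_congr_fun measurableSet_Ioi fun t _ ↦ by rw [Real.rpow_natCast]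

theorem integrableOn_and_integral_pow_mul_tsum_exp_neg (q : ℕ) {w l : ℕ → ℝ}
    (hl : ∀ k, 0 < l k) (hsum : Summable fun k ↦ |w k| / l k ^ (q + 1)) :
    IntegrableOn (fun t ↦ t ^ q * ∑' k, w k * Real.exp (-(l k * t))) (Set.Ioi 0) ∧
      ∫ t in Set.Ioi (0:ℝ), t ^ q * ∑' k, w k * Real.exp (-(l k * t)) =
        q ! * ∑' k, w k / l k ^ (q + 1) := by
  set F : ℕ → ℝ → ℝ := fun k t ↦ w k * (t ^ q * Real.exp (-(l k * t)))
  have hF_int (k : ℕ) : IntegrableOn (F k) (Set.Ioi 0) :=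
    (integrableOn_pow_mul_exp_neg_mul_Ioi q (hl k)).const_mul _
  have hF_integral (k : ℕ) : ∫ t in Set.Ioi (0:ℝ), F k t = q ! * (w k / l k ^ (q + 1)) := by
    rw [integral_const_mul, integral_pow_mul_exp_neg_mul_Ioi q (hl k)]
    ring
  have hF_norm (k : ℕ) :
      ∫ t in Set.Ioi (0:ℝ), ‖F k t‖ = q ! * (|w k| / l k ^ (q + 1)) := by
    rw [mul_div_left_comm, ← integral_pow_mul_exp_neg_mul_Ioi q (hl k), ← integral_const_mul]
    refine setIntegral_congr_fun measurableSet_Ioi fun t (ht : 0 < t) ↦ ?_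
    rw [Real.norm_eq_abs, abs_mul, abs_of_pos (mul_pos (pow_pos ht q) (Real.exp_pos _))]
  have hF_sum : Summable fun k ↦ ∫ t in Set.Ioi (0:ℝ), ‖F k t‖ := by
    simpa only [hF_norm] using hsum.mul_left _
  have hseries : (fun t ↦ t ^ q * ∑' k, w k * Real.exp (-(l k * t))) = fun t ↦ ∑' k, F k t := by
    ext t
    rw [← tsum_mul_left]
    exact tsum_congr fun k ↦ by ring
  rw [hseries, ← integral_tsum_of_summable_integral_norm hF_int hF_sum]
  simp only [hF_integral, tsum_mul_left]
  exact ⟨integrable_tsum_of_summable_integral_norm hF_int hF_sum, trivial⟩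

noncomputable def hierarchicalDensity (N θ a : ℝ) (i : ℕ) (t : ℝ) : ℝ :=
  (N ^ i)⁻¹ * ((if i = 0 then (1:ℝ) else 0) - 1) * Real.exp (-(θ * a ^ i * t)) +
    (N - 1) * ∑' k : ℕ, (N ^ (i + 1 + k))⁻¹ * Real.exp (-(θ * a ^ (i + 1 + k) * t))

theorem inv_pow_div_mul_pow_pow {K : Type*} [Field K] (N θ a : K) (m q : ℕ) :
    (N ^ m)⁻¹ / (θ * a ^ m) ^ (q + 1) = (θ ^ (q + 1))⁻¹ * (N * a ^ (q + 1))⁻¹ ^ m := by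
  simp only [div_eq_mul_inv, mul_pow, mul_inv, inv_pow, ← pow_mul]
  ring

theorem integrableOn_and_integral_pow_mul_hierarchicalDensity {N θ a r : ℝ} (hN : 0 < N)
    (hθ : 0 < θ) (ha : 0 < a) {q : ℕ} (hr : (N * a ^ (q + 1))⁻¹ = r) (hr1 : r < 1) (i : ℕ) :
    IntegrableOn (fun t ↦ t ^ q * hierarchicalDensity N θ a i t) (Set.Ioi 0) ∧
      ∫ t in Set.Ioi (0:ℝ), t ^ q * hierarchicalDensity N θ a i t =
        q ! * (θ ^ (q + 1))⁻¹ * ((if i = 0 then 1 else 0) - 1 + (N - 1) * r / (1 - r)) *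
          r ^ i := by
  have hr0 : 0 < r := hr ▸ by positivity
  have hrate (m : ℕ) : 0 < θ * a ^ m := by positivity
  have hweight (m : ℕ) : (N ^ m)⁻¹ / (θ * a ^ m) ^ (q + 1) = (θ ^ (q + 1))⁻¹ * r ^ m :=
    hr ▸ inv_pow_div_mul_pow_pow N θ a m q
  have hweight_tail (k : ℕ) : (N ^ (i + 1 + k))⁻¹ / (θ * a ^ (i + 1 + k)) ^ (q + 1) =
      (θ ^ (q + 1))⁻¹ * r ^ (i + 1) * r ^ k := by
    rw [hweight, pow_add r (i + 1), mul_assoc]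
  have hsummable : Summable fun k ↦
      |(N ^ (i + 1 + k))⁻¹| / (θ * a ^ (i + 1 + k)) ^ (q + 1) := by
    simp only [abs_of_pos (inv_pos.2 (pow_pos hN _)), hweight_tail]
    exact (summable_geometric_of_lt_one hr0.le hr1).mul_left _
  have htail_sum : ∑' k, (N ^ (i + 1 + k))⁻¹ / (θ * a ^ (i + 1 + k)) ^ (q + 1) =
      (θ ^ (q + 1))⁻¹ * r ^ (i + 1) * (1 - r)⁻¹ := by
    simp only [hweight_tail, tsum_mul_left, tsum_geometric_of_lt_one hr0.le hr1]
  obtain ⟨htail_int, htail⟩ := integrableOn_and_integral_pow_mul_tsum_exp_neg q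
    (w := fun k ↦ (N ^ (i + 1 + k))⁻¹) (fun k ↦ hrate (i + 1 + k)) hsummable
  have hjump_int := (integrableOn_pow_mul_exp_neg_mul_Ioi q (hrate i)).const_mul
    ((N ^ i)⁻¹ * ((if i = 0 then (1:ℝ) else 0) - 1))
  have hsplit : (fun t ↦ t ^ q * hierarchicalDensity N θ a i t) = fun t ↦
      (N ^ i)⁻¹ * ((if i = 0 then (1:ℝ) else 0) - 1) * (t ^ q * Real.exp (-(θ * a ^ i * t))) +
        (N - 1) * (t ^ q *
          ∑' k : ℕ, (N ^ (i + 1 + k))⁻¹ * Real.exp (-(θ * a ^ (i + 1 + k) * t))) := by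
    ext t
    rw [hierarchicalDensity]
    ring
  rw [hsplit]
  refine ⟨hjump_int.add (htail_int.const_mul _), ?_⟩
  rw [integral_add hjump_int (htail_int.const_mul _), integral_const_mul, integral_const_mul,
    integral_pow_mul_exp_neg_mul_Ioi q (hrate i), htail, htail_sum, mul_div_assoc',
    mul_div_right_comm, mul_div_right_comm (N ^ i)⁻¹, hweight]
  ring

theorem stmt15_general (N : ℕ) (hN : 2 ≤ N) (c σ : ℝ) (hc0 : 0 < c) (hcN : c < N) (hσ : 0 < σ)
    (a b θ : ℝ)
    (ha : a = c / N) (hb : b = ((N:ℝ) ^ 2 / c - 1) / ((N:ℝ) - 1)) (hθ : θ = σ * b)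
    (p : ℕ → ℝ → ℝ)
    (hp : ∀ (i : ℕ), ∀ t > 0, p i t =
      ((N:ℝ) ^ i)⁻¹ * ((if i = 0 then (1:ℝ) else 0) - 1) * Real.exp (-(θ * a ^ i * t)) +
        ((N:ℝ) - 1) *
          ∑' j : ℕ, ((N:ℝ) ^ (i + 1 + j))⁻¹ * Real.exp (-(θ * a ^ (i + 1 + j) * t)))
    (j : ℕ) (hcj : (N:ℝ) ^ (j - 1) < c ^ j) :
    ∀ i : ℕ,
      IntegrableOn (fun t : ℝ => t ^ (j - 1) * p i t) (Set.Ioi 0) ∧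
      (1 / (Nat.factorial (j - 1) : ℝ)) * ∫ t in Set.Ioi (0:ℝ), t ^ (j - 1) * p i t =
        (((N:ℝ) - 1) / (σ * ((N:ℝ) ^ 2 / c - 1))) ^ j *
          ((if i = 0 then (1:ℝ) else 0) - 1 +
            ((N:ℝ) - 1) * (N:ℝ) ^ (j - 1) / (c ^ j - (N:ℝ) ^ (j - 1))) *
          ((N:ℝ) ^ (j - 1) / c ^ j) ^ i := by
  obtain _ | q := j
  · -- `j - 1` truncates to `0`, so `hcj` reads `1 < 1`
    simp at hcj
  simp only [Nat.add_sub_cancel] at hcj ⊢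
  have hN1 : (1:ℝ) < N := by exact_mod_cast hN
  have hc2 : 0 < (N:ℝ) ^ 2 / c - 1 := by
    rw [sub_pos, one_lt_div hc0]
    nlinarith
  have hθ0 : 0 < θ := by
    rw [hθ, hb]
    exact mul_pos hσ (div_pos hc2 (by linarith))
  have hθ_inv : ((N:ℝ) - 1) / (σ * ((N:ℝ) ^ 2 / c - 1)) = θ⁻¹ := by
    rw [hθ, hb]
    field_simp
  have hr : ((N:ℝ) * a ^ (q + 1))⁻¹ = (N:ℝ) ^ q / c ^ (q + 1) := by
    have hN0 : (N:ℝ) ≠ 0 := by positivity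
    rw [ha, div_pow]
    field_simp
    ring
  have hr1 : (N:ℝ) ^ q / c ^ (q + 1) < 1 := (div_lt_one (by positivity)).2 hcj
  intro i
  have hdensity : Set.EqOn (fun t ↦ t ^ q * p i t)
      (fun t ↦ t ^ q * hierarchicalDensity N θ a i t) (Set.Ioi 0) :=
    fun t ht ↦ congrArg (t ^ q * ·) (hp i t ht)
  obtain ⟨hint, hval⟩ := integrableOn_and_integral_pow_mul_hierarchicalDensity
    (by positivity) hθ0 (ha ▸ by positivity) hr hr1 i
  refine ⟨hint.congr_fun hdensity.symm measurableSet_Ioi, ?_⟩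
  rw [setIntegral_congr_fun measurableSet_Ioi hdensity, hval, hθ_inv, inv_pow]
  have hgap : c ^ (q + 1) - (N:ℝ) ^ q ≠ 0 := (sub_pos.2 hcj).ne'
  field_simp

theorem stmt15 (N : ℕ) (hN : 2 ≤ N) (c σ : ℝ) (hc0 : 0 < c) (hcN : c < N) (hσ : 0 < σ)
    (a b θ : ℝ)
    (ha : a = c / N) (hb : b = ((N:ℝ) ^ 2 / c - 1) / ((N:ℝ) - 1)) (hθ : θ = σ * b)
    (p : ℕ → ℝ → ℝ)
    (hp : ∀ (i : ℕ), ∀ t > 0, p i t =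
      ((N:ℝ) ^ i)⁻¹ * ((if i = 0 then (1:ℝ) else 0) - 1) * Real.exp (-(θ * a ^ i * t)) +
        ((N:ℝ) - 1) *
          ∑' j : ℕ, ((N:ℝ) ^ (i + 1 + j))⁻¹ * Real.exp (-(θ * a ^ (i + 1 + j) * t)))
    (j : ℕ) (hj : 1 ≤ j) (hcj : (N:ℝ) ^ (j - 1) < c ^ j) :
    ∀ i : ℕ,
      IntegrableOn (fun t : ℝ => t ^ (j - 1) * p i t) (Set.Ioi 0) ∧
      (1 / (Nat.factorial (j - 1) : ℝ)) * ∫ t in Set.Ioi (0:ℝ), t ^ (j - 1) * p i t =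
        (((N:ℝ) - 1) / (σ * ((N:ℝ) ^ 2 / c - 1))) ^ j *
          ((if i = 0 then (1:ℝ) else 0) - 1 +
            ((N:ℝ) - 1) * (N:ℝ) ^ (j - 1) / (c ^ j - (N:ℝ) ^ (j - 1))) *
          ((N:ℝ) ^ (j - 1) / c ^ j) ^ i :=
  stmt15_general N hN c σ hc0 hcN hσ a b θ ha hb hθ p hp j hcj
end

section
/- Let N ≥ 2 be an integer, c ∈ (0,N), σ > 0, and set a = c/N, b = (N²/c − 1)/(N − 1), θ = σb. Let p_t(0) = (N − 1) Σ_{j=1}^∞ N^{−j} e^{−θ a^j t} for t > 0 (the return density of the c-hierarchical random walk). Then for every integer k ≥ 0, the integral ∫_0^∞ t^k p_t(0) dt is finite if and only if c^{k+1} > N^k, i.e. if and only if c > N^{k/(k+1)}. -/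
/-! By monotone convergence the moment integral of an exponential mixture
`∑ⱼ wⱼ e^{-rⱼ t}` can be computed term by term, and `∫₀^∞ tᵏ e^{-r t} dt = k! / r^{k+1}`.
For the return density the `j`-th term is `(N - 1) k! θ^{-(k+1)} (Nᵏ / c^{k+1})^{j+1}`,
so the integral is a geometric series with ratio `Nᵏ / c^{k+1}`. -/

open MeasureTheory Real Set
open scoped Nat

lemma summable_iff_tsum_ofReal_ne_top {ι : Type*} {f : ι → ℝ} (hf : ∀ i, 0 ≤ f i) :
    Summable f ↔ ∑' i, ENNReal.ofReal (f i) ≠ ⊤ := by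
  refine ⟨Summable.tsum_ofReal_ne_top, fun h => ?_⟩
  simpa only [ENNReal.toReal_ofReal (hf _)] using ENNReal.summable_toReal h

lemma summable_pow_succ_iff {s : ℝ} (hs : 0 ≤ s) : Summable (fun j : ℕ => s ^ (j + 1)) ↔ s < 1 := by
  rw [summable_nat_add_iff 1 (f := fun j => s ^ j), summable_geometric_iff_norm_lt_one,
    Real.norm_of_nonneg hs]

lemma lintegral_pow_mul_exp_neg_mul_Ioi (k : ℕ) {r : ℝ} (hr : 0 < r) :
    ∫⁻ t in Ioi 0, ENNReal.ofReal (t ^ k * exp (-(r * t))) = ENNReal.ofReal (k ! / r ^ (k + 1)) := by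
  have hcast : ∀ t : ℝ, t ^ k * exp (-(r * t)) = t ^ ((k + 1 : ℝ) - 1) * exp (-(r * t)) := by
    intro t
    rw [add_sub_cancel_right, rpow_natCast]
  have hint : IntegrableOn (fun t : ℝ => t ^ k * exp (-(r * t))) (Ioi 0) := by
    simpa [rpow_natCast] using
      integrableOn_rpow_mul_exp_neg_mul_rpow (s := k) (p := 1) (by linarith [k.cast_nonneg (α := ℝ)])
        one_pos hr
  rw [← ofReal_integral_eq_lintegral_ofReal hint
    ((ae_restrict_iff' measurableSet_Ioi).2 (.of_forall fun t (ht : 0 < t) => by positivity))]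
  simp_rw [hcast]
  rw [integral_rpow_mul_exp_neg_mul_Ioi (by positivity) hr, Gamma_nat_eq_factorial, ← Nat.cast_succ,
    rpow_natCast, one_div, inv_pow, inv_mul_eq_div]

section ExponentialMixture

variable {w r : ℕ → ℝ}

lemma summable_mul_exp_neg_mul (hw : ∀ j, 0 ≤ w j) (hws : Summable w) (hr : ∀ j, 0 < r j)
    {t : ℝ} (ht : 0 ≤ t) : Summable (fun j => w j * exp (-(r j * t))) := by
  refine hws.of_nonneg_of_le (fun j => mul_nonneg (hw j) (exp_nonneg _)) (fun j => ?_)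
  exact mul_le_of_le_one_right (hw j) (exp_le_one_iff.2 (by nlinarith [hr j]))

lemma lintegral_pow_mul_tsum_exp_neg_mul (k : ℕ) (hw : ∀ j, 0 ≤ w j) (hws : Summable w)
    (hr : ∀ j, 0 < r j) :
    ∫⁻ t in Ioi 0, ENNReal.ofReal (t ^ k * ∑' j, w j * exp (-(r j * t))) =
      ∑' j, ENNReal.ofReal (k ! * (w j / r j ^ (k + 1))) := by
  have hsplit : EqOn (fun t => ENNReal.ofReal (t ^ k * ∑' j, w j * exp (-(r j * t))))
      (fun t => ∑' j, ENNReal.ofReal (w j) * ENNReal.ofReal (t ^ k * exp (-(r j * t)))) (Ioi 0) := by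
    intro t (ht : 0 < t)
    dsimp only
    rw [← tsum_mul_left, ENNReal.ofReal_tsum_of_nonneg
      (fun j => mul_nonneg (pow_nonneg ht.le k) (mul_nonneg (hw j) (exp_nonneg _)))
      ((summable_mul_exp_neg_mul hw hws hr ht.le).mul_left _)]
    refine tsum_congr fun j => ?_
    rw [← ENNReal.ofReal_mul (hw j), mul_left_comm]
  rw [setLIntegral_congr_fun measurableSet_Ioi hsplit, lintegral_tsum (fun j => by fun_prop)]
  refine tsum_congr fun j => ?_
  rw [lintegral_const_mul _ (by fun_prop), lintegral_pow_mul_exp_neg_mul_Ioi k (hr j),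
    ← ENNReal.ofReal_mul (hw j), mul_div_left_comm]

theorem integrableOn_pow_mul_tsum_exp_neg_mul_iff (k : ℕ) (hw : ∀ j, 0 ≤ w j) (hws : Summable w)
    (hr : ∀ j, 0 < r j) :
    IntegrableOn (fun t => t ^ k * ∑' j, w j * exp (-(r j * t))) (Ioi 0) ↔
      Summable (fun j => w j / r j ^ (k + 1)) := by
  have hmeas : Measurable (fun t => t ^ k * ∑' j, w j * exp (-(r j * t))) :=
    (measurable_id.pow_const k).mul (Measurable.tsum fun j => by fun_prop)
  have hnonneg : 0 ≤ᵐ[volume.restrict (Ioi 0)] fun t => t ^ k * ∑' j, w j * exp (-(r j * t)) :=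
    (ae_restrict_iff' measurableSet_Ioi).2 (.of_forall fun t (ht : 0 < t) =>
      mul_nonneg (pow_nonneg ht.le k) (tsum_nonneg fun j => mul_nonneg (hw j) (exp_nonneg _)))
  rw [IntegrableOn, ← lintegral_ofReal_ne_top_iff_integrable hmeas.aestronglyMeasurable hnonneg,
    lintegral_pow_mul_tsum_exp_neg_mul k hw hws hr,
    ← summable_iff_tsum_ofReal_ne_top fun j =>
      mul_nonneg (Nat.cast_nonneg _) (div_nonneg (hw j) (pow_nonneg (hr j).le _)),
    summable_mul_left_iff (by positivity)]

end ExponentialMixture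

theorem stmt16 (N : ℕ) (hN : 2 ≤ N) (c σ : ℝ) (hc0 : 0 < c) (hcN : c < N) (hσ : 0 < σ)
    (a b θ : ℝ)
    (ha : a = c / N) (hb : b = ((N:ℝ) ^ 2 / c - 1) / ((N:ℝ) - 1)) (hθ : θ = σ * b)
    (p : ℝ → ℝ)
    (hp : ∀ t > 0, p t =
      ((N:ℝ) - 1) * ∑' j : ℕ, ((N:ℝ) ^ (j + 1))⁻¹ * Real.exp (-(θ * a ^ (j + 1) * t))) :
    ∀ k : ℕ,
      IntegrableOn (fun t : ℝ => t ^ k * p t) (Set.Ioi 0) ↔ (N:ℝ) ^ k < c ^ (k + 1) := by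
  intro k
  have hN1 : (1 : ℝ) < N := by exact_mod_cast hN
  have ha0 : 0 < a := ha ▸ div_pos hc0 (one_pos.trans hN1)
  have hθ0 : 0 < θ := by
    have hNc : 1 < (N : ℝ) ^ 2 / c := (one_lt_div hc0).2 (by nlinarith)
    rw [hθ, hb]
    exact mul_pos hσ (div_pos (by linarith) (by linarith))
  have hw : ∀ j : ℕ, 0 ≤ ((N : ℝ) - 1) * ((N : ℝ) ^ (j + 1))⁻¹ :=
    fun j => mul_nonneg (by linarith) (by positivity)
  have hws : Summable fun j : ℕ => ((N : ℝ) - 1) * ((N : ℝ) ^ (j + 1))⁻¹ := by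
    simpa only [inv_pow] using ((summable_pow_succ_iff (inv_nonneg.2 (one_pos.trans hN1).le)).2
      (inv_lt_one_of_one_lt₀ hN1)).mul_left ((N : ℝ) - 1)
  have hp' : EqOn (fun t => t ^ k * p t) (fun t => t ^ k *
      ∑' j : ℕ, ((N : ℝ) - 1) * ((N : ℝ) ^ (j + 1))⁻¹ * exp (-(θ * a ^ (j + 1) * t))) (Ioi 0) := by
    intro t ht
    simp only [hp t ht, ← tsum_mul_left, mul_assoc]
  have hterm : ∀ j : ℕ, ((N : ℝ) - 1) * ((N : ℝ) ^ (j + 1))⁻¹ / (θ * a ^ (j + 1)) ^ (k + 1) =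
      ((N - 1) / θ ^ (k + 1)) * ((N : ℝ) ^ k / c ^ (k + 1)) ^ (j + 1) := by
    intro j
    have hN0 : (N : ℝ) ≠ 0 := by positivity
    simp only [ha, mul_pow, div_pow, ← pow_mul]
    field_simp
    ring
  rw [integrableOn_congr_fun hp' measurableSet_Ioi,
    integrableOn_pow_mul_tsum_exp_neg_mul_iff k hw hws (fun j => by positivity), funext hterm,
    summable_mul_left_iff (by positivity), summable_pow_succ_iff (by positivity),
    div_lt_one (by positivity)]
end

section
/- Let d ≥ 1 be an integer, let α ∈ (0,2] with α < d, and let β ∈ (0,1). Let φ : ℝ^d → [0,∞) be continuous with compact support and not identically 0. Then ∫_{ℝ^d} ( ∫_{ℝ^d} φ(y) ‖x−y‖^{−(d−α)} dy )^{1+β} dx < ∞ if and only if d > α(1 + 1/β). -/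
/-!
Write `s = d - α` and `Gφ(x) = ∫ φ(y) ‖x - y‖^(-s) dy`. If `supp φ ⊆ closedBall 0 R`, then for
`‖x‖ ≥ 2R` every `y` in the support satisfies `‖x‖/2 ≤ ‖x - y‖ ≤ 2‖x‖`, so
`2^(-s) ‖φ‖₁ ‖x‖^(-s) ≤ Gφ(x) ≤ 2^s ‖φ‖₁ ‖x‖^(-s)`. On the ball `‖x‖ < 2R` the potential is
bounded, being the convolution of a continuous compactly supported function with the locally
integrable kernel `‖z‖^(-s)`. Hence `(Gφ)^(1+β)` is integrable iff `‖x‖^(-s(1+β))` is integrable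
at infinity, which in polar coordinates means `s(1+β) > d`, i.e. `d > α(1 + 1/β)`.
-/

open MeasureTheory Metric Set Module

theorem integrableOn_iff_of_le_of_le {X : Type*} [MeasurableSpace X] {μ : Measure X}
    {f h : X → ℝ} {s : Set X} {c₁ c₂ : ℝ} (hs : MeasurableSet s) (hc₁ : 0 < c₁)
    (hf : AEStronglyMeasurable f (μ.restrict s)) (hh : AEStronglyMeasurable h (μ.restrict s))
    (h_nonneg : ∀ x ∈ s, 0 ≤ h x) (hle : ∀ x ∈ s, c₁ * h x ≤ f x)
    (hge : ∀ x ∈ s, f x ≤ c₂ * h x) :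
    IntegrableOn f s μ ↔ IntegrableOn h s μ := by
  refine ⟨fun hfi => (hfi.const_mul c₁⁻¹).mono' hh ?_, fun hhi => (hhi.const_mul c₂).mono' hf ?_⟩
  · refine ae_restrict_of_forall_mem hs fun x hx => ?_
    rw [Real.norm_of_nonneg (h_nonneg x hx), ← div_eq_inv_mul, le_div_iff₀' hc₁]
    exact hle x hx
  · refine ae_restrict_of_forall_mem hs fun x hx => ?_
    rw [Real.norm_of_nonneg ((mul_nonneg hc₁.le (h_nonneg x hx)).trans (hle x hx))]
    exact hge x hx

theorem Continuous.integrable_iff_integrableOn_compl_ball {X E : Type*} [MetricSpace X]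
    [ProperSpace X] [MeasurableSpace X] [OpensMeasurableSpace X] [NormedAddCommGroup E]
    {μ : Measure X} [IsFiniteMeasureOnCompacts μ] {f : X → E} (hf : Continuous f) (x : X)
    (ρ : ℝ) : Integrable f μ ↔ IntegrableOn f (ball x ρ)ᶜ μ := by
  refine ⟨Integrable.integrableOn, fun h => ?_⟩
  rw [← integrableOn_univ, ← union_compl_self (ball x ρ)]
  exact ((hf.continuousOn.integrableOn_compact (isCompact_closedBall x ρ)).mono_set
    ball_subset_closedBall).union h

section FarField

variable {E : Type*} [NormedAddCommGroup E] {s : ℝ} {x y : E}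

theorem norm_sub_rpow_neg_le (hs : 0 ≤ s) (hx : 0 < ‖x‖) (hy : 2 * ‖y‖ ≤ ‖x‖) :
    ‖x - y‖ ^ (-s) ≤ 2 ^ s * ‖x‖ ^ (-s) := by
  have hxy : 2⁻¹ * ‖x‖ ≤ ‖x - y‖ := by linarith [norm_sub_norm_le x y]
  calc ‖x - y‖ ^ (-s) ≤ (2⁻¹ * ‖x‖) ^ (-s) :=
        Real.rpow_le_rpow_of_nonpos (by positivity) hxy (neg_nonpos.2 hs)
    _ = 2 ^ s * ‖x‖ ^ (-s) := by
        rw [Real.mul_rpow (by norm_num) (norm_nonneg x), Real.inv_rpow zero_le_two,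
          Real.rpow_neg zero_le_two, inv_inv]

theorem le_norm_sub_rpow_neg (hs : 0 ≤ s) (hx : 0 < ‖x‖) (hy : 2 * ‖y‖ ≤ ‖x‖) :
    2 ^ (-s) * ‖x‖ ^ (-s) ≤ ‖x - y‖ ^ (-s) := by
  have hxy : ‖x - y‖ ≤ 2 * ‖x‖ := by linarith [norm_sub_le x y, norm_nonneg y]
  calc 2 ^ (-s) * ‖x‖ ^ (-s) = (2 * ‖x‖) ^ (-s) :=
        (Real.mul_rpow zero_le_two (norm_nonneg x)).symm
    _ ≤ ‖x - y‖ ^ (-s) :=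
        Real.rpow_le_rpow_of_nonpos (by linarith [norm_sub_norm_le x y]) hxy (neg_nonpos.2 hs)

end FarField

theorem mul_rpow_neg_rpow {c t : ℝ} (hc : 0 ≤ c) (ht : 0 ≤ t) (s q : ℝ) :
    (c * t ^ (-s)) ^ q = c ^ q * t ^ (-(s * q)) := by
  rw [Real.mul_rpow hc (Real.rpow_nonneg ht _), ← Real.rpow_mul ht, neg_mul]

section Potential

variable {E : Type*} [NormedAddCommGroup E] [MeasurableSpace E]

-- Indexed by the kernel exponent: the Riesz potential of order `α` on `ℝ^d` is
-- `rieszPotential μ (d - α)`.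
noncomputable def rieszPotential (μ : Measure E) (s : ℝ) (φ : E → ℝ) (x : E) : ℝ :=
  ∫ y, φ y * ‖x - y‖ ^ (-s) ∂μ

variable {μ : Measure E} {φ : E → ℝ} {s R : ℝ} {x : E}

theorem rieszPotential_nonneg (hφ : ∀ y, 0 ≤ φ y) (x : E) : 0 ≤ rieszPotential μ s φ x :=
  integral_nonneg fun y => mul_nonneg (hφ y) (by positivity)

theorem rieszPotential_le_of_far (hφ0 : ∀ y, 0 ≤ φ y) (hφ : Integrable φ μ)
    (hR : ∀ y ∈ Function.support φ, ‖y‖ ≤ R) (hR0 : 0 < R) (hs : 0 ≤ s) (hx : 2 * R ≤ ‖x‖) :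
    rieszPotential μ s φ x ≤ 2 ^ s * (∫ y, φ y ∂μ) * ‖x‖ ^ (-s) := by
  have hbound : ∀ y, φ y * ‖x - y‖ ^ (-s) ≤ φ y * (2 ^ s * ‖x‖ ^ (-s)) := fun y => by
    by_cases hy : φ y = 0
    · simp [hy]
    · exact mul_le_mul_of_nonneg_left (norm_sub_rpow_neg_le hs (by linarith)
        (by linarith [hR y hy])) (hφ0 y)
  calc rieszPotential μ s φ x ≤ ∫ y, φ y * (2 ^ s * ‖x‖ ^ (-s)) ∂μ :=
        integral_mono_of_nonneg (.of_forall fun y => mul_nonneg (hφ0 y) (by positivity))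
          (hφ.mul_const _) (.of_forall hbound)
    _ = 2 ^ s * (∫ y, φ y ∂μ) * ‖x‖ ^ (-s) := by rw [integral_mul_const]; ring

theorem le_rieszPotential_of_far (hφ0 : ∀ y, 0 ≤ φ y) (hφ : Integrable φ μ)
    (hint : Integrable (fun y => φ y * ‖x - y‖ ^ (-s)) μ)
    (hR : ∀ y ∈ Function.support φ, ‖y‖ ≤ R) (hR0 : 0 < R) (hs : 0 ≤ s) (hx : 2 * R ≤ ‖x‖) :
    2 ^ (-s) * (∫ y, φ y ∂μ) * ‖x‖ ^ (-s) ≤ rieszPotential μ s φ x := by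
  have hbound : ∀ y, φ y * (2 ^ (-s) * ‖x‖ ^ (-s)) ≤ φ y * ‖x - y‖ ^ (-s) := fun y => by
    by_cases hy : φ y = 0
    · simp [hy]
    · exact mul_le_mul_of_nonneg_left (le_norm_sub_rpow_neg hs (by linarith)
        (by linarith [hR y hy])) (hφ0 y)
  calc 2 ^ (-s) * (∫ y, φ y ∂μ) * ‖x‖ ^ (-s) = ∫ y, φ y * (2 ^ (-s) * ‖x‖ ^ (-s)) ∂μ := by
        rw [integral_mul_const]; ring
    _ ≤ rieszPotential μ s φ x := integral_mono (hφ.mul_const _) hint hbound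

theorem rieszPotential_eq_convolution (x : E) :
    rieszPotential μ s φ x =
      convolution φ (fun z => ‖z‖ ^ (-s)) (ContinuousLinearMap.mul ℝ ℝ) μ x := by
  simp only [rieszPotential, convolution_def, ContinuousLinearMap.mul_apply']

variable [NormedSpace ℝ E] [FiniteDimensional ℝ E] [BorelSpace E] [μ.IsAddHaarMeasure]

theorem locallyIntegrable_norm_rpow_neg (hdim : 1 ≤ finrank ℝ E) (hs : s < finrank ℝ E) :
    LocallyIntegrable (fun z : E => ‖z‖ ^ (-s)) μ :=
  locallyIntegrable_of_norm_le_rpow (C := 1) hdim hs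
    (.of_forall fun z => by rw [one_mul, Real.norm_of_nonneg (by positivity)])
    (measurable_norm.pow_const _).aestronglyMeasurable

theorem HasCompactSupport.continuous_rieszPotential (hsupp : HasCompactSupport φ)
    (hφ : Continuous φ) (hdim : 1 ≤ finrank ℝ E) (hs : s < finrank ℝ E) :
    Continuous (rieszPotential μ s φ) := by
  simp only [funext rieszPotential_eq_convolution]
  exact hsupp.continuous_convolution_left _ hφ (locallyIntegrable_norm_rpow_neg hdim hs)

theorem HasCompactSupport.integrable_mul_norm_sub_rpow_neg (hsupp : HasCompactSupport φ)
    (hφ : Continuous φ) (hdim : 1 ≤ finrank ℝ E) (hs : s < finrank ℝ E) (x : E) :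
    Integrable (fun y => φ y * ‖x - y‖ ^ (-s)) μ := by
  simpa only [ConvolutionExistsAt, ContinuousLinearMap.mul_apply'] using
    hsupp.convolutionExists_left (ContinuousLinearMap.mul ℝ ℝ) hφ
      (locallyIntegrable_norm_rpow_neg hdim hs) x

theorem integrableOn_norm_rpow_neg_compl_ball_iff [Nontrivial E] {ρ p : ℝ} (hρ : 0 < ρ) :
    IntegrableOn (fun x : E => ‖x‖ ^ (-p)) (ball 0 ρ)ᶜ μ ↔ (finrank ℝ E : ℝ) < p := by
  have hind : (ball (0 : E) ρ)ᶜ.indicator (fun x => ‖x‖ ^ (-p)) =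
      fun x => (Ici ρ).indicator (fun t => t ^ (-p)) ‖x‖ := by
    ext x
    simp [indicator]
  have hpow : EqOn (fun t : ℝ => t ^ (finrank ℝ E - 1) * t ^ (-p))
      (fun t => t ^ ((finrank ℝ E : ℝ) - 1 - p)) (Ioi ρ) := fun t (ht : ρ < t) => by
    simp only
    rw [← Real.rpow_natCast, ← Real.rpow_add (hρ.trans ht), Nat.cast_sub Module.finrank_pos,
      Nat.cast_one, sub_eq_add_neg _ p]
  rw [← integrable_indicator_iff measurableSet_ball.compl, hind, integrable_fun_norm_addHaar μ]
  simp only [smul_eq_mul, ← indicator_mul_right (Ici ρ) (fun y : ℝ => y ^ (finrank ℝ E - 1))]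
  rw [IntegrableOn, integrable_indicator_iff measurableSet_Ici, IntegrableOn,
    Measure.restrict_restrict measurableSet_Ici, inter_eq_left.2 (Ici_subset_Ioi.2 hρ),
    ← IntegrableOn, integrableOn_Ici_iff_integrableOn_Ioi,
    integrableOn_congr_fun hpow measurableSet_Ioi, integrableOn_Ioi_rpow_iff hρ]
  constructor <;> intro h <;> linarith

theorem integrable_rieszPotential_rpow_iff (hsupp : HasCompactSupport φ) (hφ : Continuous φ)
    (hφ0 : ∀ y, 0 ≤ φ y) (hφ_ne : φ ≠ 0) (hs0 : 0 ≤ s) (hs : s < finrank ℝ E) {q : ℝ}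
    (hq : 0 < q) :
    Integrable (fun x => rieszPotential μ s φ x ^ q) μ ↔ (finrank ℝ E : ℝ) < s * q := by
  have hdim : 1 ≤ finrank ℝ E := by exact_mod_cast hs0.trans_lt hs
  have : Nontrivial E := Module.nontrivial_of_finrank_pos (R := ℝ) hdim
  obtain ⟨R, hR0, hR⟩ := hsupp.isCompact.isBounded.exists_pos_norm_le
  have hR' : ∀ y ∈ Function.support φ, ‖y‖ ≤ R := fun y hy => hR y (subset_tsupport φ hy)
  have hφi : Integrable φ μ := hφ.integrable_of_hasCompactSupport hsupp
  obtain ⟨y₀, hy₀⟩ := Function.ne_iff.1 hφ_ne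
  have hM : 0 < ∫ y, φ y ∂μ :=
    hφ.integral_pos_of_hasCompactSupport_nonneg_nonzero hsupp hφ0 hy₀
  have hfar : ∀ x ∈ (ball (0 : E) (2 * R))ᶜ, 2 * R ≤ ‖x‖ := fun x hx => by
    simpa using hx
  have hcont_q : Continuous fun x => rieszPotential μ s φ x ^ q :=
    (hsupp.continuous_rieszPotential hφ hdim hs).rpow_const fun _ => Or.inr hq.le
  rw [hcont_q.integrable_iff_integrableOn_compl_ball 0 (2 * R),
    integrableOn_iff_of_le_of_le (h := fun x => ‖x‖ ^ (-(s * q))) measurableSet_ball.compl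
      (c₁ := (2 ^ (-s) * ∫ y, φ y ∂μ) ^ q) (c₂ := (2 ^ s * ∫ y, φ y ∂μ) ^ q) (by positivity)
      hcont_q.aestronglyMeasurable (measurable_norm.pow_const _).aestronglyMeasurable
      (fun x _ => by positivity),
    integrableOn_norm_rpow_neg_compl_ball_iff (by positivity)]
  · intro x hx
    rw [← mul_rpow_neg_rpow (by positivity) (norm_nonneg x)]
    exact Real.rpow_le_rpow (by positivity) (le_rieszPotential_of_far hφ0 hφi
      (hsupp.integrable_mul_norm_sub_rpow_neg hφ hdim hs x) hR' hR0 hs0 (hfar x hx)) hq.le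
  · intro x hx
    rw [← mul_rpow_neg_rpow (by positivity) (norm_nonneg x)]
    exact Real.rpow_le_rpow (rieszPotential_nonneg hφ0 x)
      (rieszPotential_le_of_far hφ0 hφi hR' hR0 hs0 (hfar x hx)) hq.le

theorem lintegral_rieszPotential_rpow_lt_top_iff (hsupp : HasCompactSupport φ)
    (hφ : Continuous φ) (hφ0 : ∀ y, 0 ≤ φ y) (hφ_ne : φ ≠ 0) (hs0 : 0 ≤ s)
    (hs : s < finrank ℝ E) {q : ℝ} (hq : 0 < q) :
    ∫⁻ x, ENNReal.ofReal (rieszPotential μ s φ x ^ q) ∂μ < ⊤ ↔ (finrank ℝ E : ℝ) < s * q := by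
  have hdim : 1 ≤ finrank ℝ E := by exact_mod_cast hs0.trans_lt hs
  rw [lt_top_iff_ne_top, lintegral_ofReal_ne_top_iff_integrable
      ((hsupp.continuous_rieszPotential hφ hdim hs).rpow_const
        fun _ => Or.inr hq.le).aestronglyMeasurable
      (.of_forall fun x => Real.rpow_nonneg (rieszPotential_nonneg hφ0 x) q),
    integrable_rieszPotential_rpow_iff hsupp hφ hφ0 hφ_ne hs0 hs hq]

end Potential

theorem stmt17_general (d : ℕ) (α : ℝ) (hα0 : 0 < α) (hαd : α < d)
    (β : ℝ) (hβ0 : 0 < β)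
    (φ : EuclideanSpace ℝ (Fin d) → ℝ) (hcont : Continuous φ)
    (hsupp : HasCompactSupport φ) (hnonneg : ∀ x, 0 ≤ φ x) (hne : φ ≠ 0) :
    (∫⁻ x : EuclideanSpace ℝ (Fin d),
        ENNReal.ofReal
          ((∫ y : EuclideanSpace ℝ (Fin d), φ y * ‖x - y‖ ^ (-((d:ℝ) - α))) ^ (1 + β)))
      < ⊤ ↔ (d:ℝ) > α * (1 + 1 / β) := by
  have hs : (d : ℝ) - α < finrank ℝ (EuclideanSpace ℝ (Fin d)) := by
    rw [finrank_euclideanSpace_fin]; linarith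
  refine (lintegral_rieszPotential_rpow_lt_top_iff hsupp hcont hnonneg hne (by linarith) hs
    (by linarith : 0 < 1 + β)).trans ?_
  have hrhs : α * (1 + 1 / β) = α * (1 + β) / β := by field_simp; ring
  rw [finrank_euclideanSpace_fin, gt_iff_lt, hrhs, div_lt_iff₀ hβ0]
  constructor <;> intro h <;> linarith

theorem stmt17 (d : ℕ) (hd : 1 ≤ d) (α : ℝ) (hα0 : 0 < α) (hα2 : α ≤ 2) (hαd : α < d)
    (β : ℝ) (hβ0 : 0 < β) (hβ1 : β < 1)
    (φ : EuclideanSpace ℝ (Fin d) → ℝ) (hcont : Continuous φ)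
    (hsupp : HasCompactSupport φ) (hnonneg : ∀ x, 0 ≤ φ x) (hne : φ ≠ 0) :
    (∫⁻ x : EuclideanSpace ℝ (Fin d),
        ENNReal.ofReal
          ((∫ y : EuclideanSpace ℝ (Fin d), φ y * ‖x - y‖ ^ (-((d:ℝ) - α))) ^ (1 + β)))
      < ⊤ ↔ (d:ℝ) > α * (1 + 1 / β) :=
  stmt17_general d α hα0 hαd β hβ0 φ hcont hsupp hnonneg hne
end
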